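/- arXiv:1702.05946 — 4 statements merged into one kernel-verified Lean document; each statement's English description precedes it below -/
import Mathlib

section
/- Every finite connected directed graph with loops G that has at least two vertices and at least one unlooped vertex is isomorphic to a Cartesian product of prime digraphs: there exist k ≥ 1 and prime digraphs G_1, …, G_k such that G ≅ ∏_{i∈Fin k} G_i. -/
universe u

namespace Digraph

/-- Cartesian product of two digraphs. -/
def boxProd {α β : Type*} (G : Digraph α) (H : Digraph β) : Digraph (α × β) where
  Adj p q := (G.Adj p.1 q.1 ∧ p.2 = q.2) ∨ (p.1 = q.1 ∧ H.Adj p.2 q.2)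

/-- Cartesian product of a family of digraphs. -/
def prodFam {I : Type*} {V : I → Type*} (G : ∀ i, Digraph (V i)) : Digraph (∀ i, V i) where
  Adj u v := ∃ κ, (G κ).Adj (u κ) (v κ) ∧ ∀ i, i ≠ κ → u i = v i

/-- The shadow of a digraph: distinct vertices are adjacent iff there is an arc between them
in some direction. -/
def shadow {α : Type*} (G : Digraph α) : SimpleGraph α where
  Adj a b := a ≠ b ∧ (G.Adj a b ∨ G.Adj b a)
  symm := by
    constructor
    rintro a b ⟨hab, h⟩
    exact ⟨hab.symm, h.symm⟩
  loopless := by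
    constructor
    rintro a ⟨ha, -⟩
    exact ha rfl

/-- A digraph is connected if its shadow is connected. -/
def Connected {α : Type*} (G : Digraph α) : Prop := G.shadow.Connected

/-- Isomorphisms of digraphs. -/
abbrev Iso {α β : Type*} (G : Digraph α) (H : Digraph β) := RelIso G.Adj H.Adj

/-- A digraph is prime w.r.t. the Cartesian product if it is nontrivial, connected, has an
unlooped vertex, and in every representation as a product of two digraphs one factor
has exactly one vertex. -/
def IsPrime {α : Type u} (G : Digraph α) : Prop :=
  G.Connected ∧ Nontrivial α ∧ (∃ v, ¬ G.Adj v v) ∧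
    ∀ {A B : Type u} (GA : Digraph A) (GB : Digraph B),
      Nonempty (G.Iso (GA.boxProd GB)) →
        (Nonempty A ∧ Subsingleton A) ∨ (Nonempty B ∧ Subsingleton B)

/-- The vertex set of the connected component of `a` in the shadow of the product. -/
def weakComponent {I : Type*} {V : I → Type*} (G : ∀ i, Digraph (V i)) (a : ∀ i, V i) :
    Set (∀ i, V i) :=
  {v | (prodFam G).shadow.Reachable a v}

/-- The weak Cartesian product: the induced subdigraph of the Cartesian product on the
connected component (in the shadow) of the vertex `a`. -/
def weakProd {I : Type*} {V : I → Type*} (G : ∀ i, Digraph (V i)) (a : ∀ i, V i) :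
    Digraph (weakComponent G a) where
  Adj u v := (prodFam G).Adj u.1 v.1

end Digraph

/-! A non-prime digraph splits as `A □ B` with both factors nontrivial; the factors inherit
connectedness (the shadow of `A □ B` is the box product of the shadows) and an unlooped vertex,
and have fewer vertices, so induction on the number of vertices factors them, and the two
factorizations concatenate. -/

theorem Nat.card_lt_card_prod {A B : Type*} [Finite A] [Finite B] [Nontrivial A]
    [Nontrivial B] : Nat.card A < Nat.card (A × B) ∧ Nat.card B < Nat.card (A × B) := by
  have := Finite.one_lt_card (α := A)
  have := Finite.one_lt_card (α := B)
  rw [Nat.card_prod]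
  constructor <;> nlinarith

namespace Digraph

section

variable {α β : Type*}

def Iso.shadow {G : Digraph α} {H : Digraph β} (φ : G.Iso H) : G.shadow ≃g H.shadow where
  toEquiv := φ.toEquiv
  map_rel_iff' {a b} := by
    simp [Digraph.shadow, φ.map_rel_iff]

theorem Iso.exists_not_adj_self_iff {G : Digraph α} {H : Digraph β} (φ : G.Iso H) :
    (∃ v, ¬ G.Adj v v) ↔ ∃ w, ¬ H.Adj w w :=
  φ.toEquiv.exists_congr fun _ => φ.map_rel_iff.not.symm

theorem Iso.connected_iff {G : Digraph α} {H : Digraph β} (φ : G.Iso H) :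
    G.Connected ↔ H.Connected :=
  φ.shadow.connected_iff

def Iso.boxProdCongr {α' β' : Type*} {G : Digraph α} {G' : Digraph α'}
    {H : Digraph β} {H' : Digraph β'} (φ : G.Iso G') (ψ : H.Iso H') :
    (G.boxProd H).Iso (G'.boxProd H') where
  toEquiv := φ.toEquiv.prodCongr ψ.toEquiv
  map_rel_iff' {p q} := by
    simp [boxProd, φ.map_rel_iff, ψ.map_rel_iff]

def isoProdFamUnique (I : Type*) [Unique I] (G : Digraph α) :
    G.Iso (prodFam fun _ : I => G) where
  toEquiv := (Equiv.funUnique I α).symm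
  map_rel_iff' {a b} := by
    simp [prodFam, Unique.forall_iff, Unique.exists_iff]

def boxProdIsoProdFamSum {I J : Type*} {V : I ⊕ J → Type*} (G : ∀ i, Digraph (V i)) :
    ((prodFam fun i => G (.inl i)).boxProd (prodFam fun j => G (.inr j))).Iso (prodFam G) where
  toEquiv := (Equiv.sumPiEquivProdPi V).symm
  map_rel_iff' {p q} := by
    simp only [prodFam, boxProd, Equiv.sumPiEquivProdPi_symm_apply, Sum.exists, Sum.forall,
      funext_iff]
    grind

def prodFamCongrLeft {I J : Type*} {V : I → Type*} (G : ∀ i, Digraph (V i)) (e : I ≃ J) :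
    (prodFam G).Iso (prodFam fun j => G (e.symm j)) where
  toEquiv := Equiv.piCongrLeft' V e
  map_rel_iff' {u v} := by
    simp only [prodFam, Equiv.piCongrLeft'_apply, e.forall_congr_left, e.exists_congr_left]
    simp

theorem shadow_boxProd (G : Digraph α) (H : Digraph β) :
    (G.boxProd H).shadow = G.shadow.boxProd H.shadow := by
  ext ⟨a, b⟩ ⟨c, d⟩
  simp only [shadow, boxProd, SimpleGraph.boxProd_adj, ne_eq, Prod.mk.injEq]
  grind

theorem connected_boxProd {G : Digraph α} {H : Digraph β} :
    (G.boxProd H).Connected ↔ G.Connected ∧ H.Connected := by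
  rw [Connected, shadow_boxProd, SimpleGraph.connected_boxProd]
  rfl

theorem exists_not_adj_self_boxProd {G : Digraph α} {H : Digraph β} :
    (∃ p, ¬ (G.boxProd H).Adj p p) ↔ (∃ a, ¬ G.Adj a a) ∧ ∃ b, ¬ H.Adj b b := by
  simp [boxProd]

end

theorem exists_iso_boxProd_of_not_isPrime {V : Type u} {G : Digraph V} (hconn : G.Connected)
    (hnt : Nontrivial V) (hul : ∃ v, ¬ G.Adj v v) (hG : ¬ G.IsPrime) :
    ∃ (A B : Type u) (GA : Digraph A) (GB : Digraph B),
      Nontrivial A ∧ Nontrivial B ∧ Nonempty (G.Iso (GA.boxProd GB)) := by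
  by_contra! hsplit
  refine hG ⟨hconn, hnt, hul, fun {A B} GA GB ⟨φ⟩ => ?_⟩
  obtain ⟨v⟩ := hnt.to_nonempty
  have : Nonempty A := ⟨(φ v).1⟩
  have : Nonempty B := ⟨(φ v).2⟩
  by_cases hA : Nontrivial A
  · exact .inr ⟨‹_›, not_nontrivial_iff_subsingleton.mp fun hB => (hsplit A B GA GB hA hB).false φ⟩
  · exact .inl ⟨‹_›, not_nontrivial_iff_subsingleton.mp hA⟩

def HasPrimeFactorization {V : Type u} (G : Digraph V) : Prop :=
  ∃ k : ℕ, 1 ≤ k ∧ ∃ (W : Fin k → Type u) (Gs : ∀ i, Digraph (W i)),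
    (∀ i, (Gs i).IsPrime) ∧ Nonempty (G.Iso (prodFam Gs))

theorem IsPrime.hasPrimeFactorization {V : Type u} {G : Digraph V} (hG : G.IsPrime) :
    G.HasPrimeFactorization :=
  ⟨1, le_rfl, fun _ => V, fun _ => G, fun _ => hG, ⟨isoProdFamUnique (Fin 1) G⟩⟩

theorem HasPrimeFactorization.of_iso {V W : Type u} {G : Digraph V} {H : Digraph W}
    (φ : G.Iso H) (hH : H.HasPrimeFactorization) : G.HasPrimeFactorization := by
  obtain ⟨k, hk, W, Gs, hprime, ⟨ψ⟩⟩ := hH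
  exact ⟨k, hk, W, Gs, hprime, ⟨φ.trans ψ⟩⟩

theorem HasPrimeFactorization.boxProd {V W : Type u} {G : Digraph V} {H : Digraph W}
    (hG : G.HasPrimeFactorization) (hH : H.HasPrimeFactorization) :
    (G.boxProd H).HasPrimeFactorization := by
  obtain ⟨k, hk, U, Gs, hGs, ⟨φ⟩⟩ := hG
  obtain ⟨l, -, U', Hs, hHs, ⟨ψ⟩⟩ := hH
  let Fs : ∀ s, Digraph (Sum.elim U U' s)
    | .inl i => Gs i
    | .inr j => Hs j
  have hFs : ∀ s, (Fs s).IsPrime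
    | .inl i => hGs i
    | .inr j => hHs j
  refine ⟨k + l, by omega, fun j => Sum.elim U U' (finSumFinEquiv.symm j),
    fun j => Fs (finSumFinEquiv.symm j), fun j => hFs _, ⟨?_⟩⟩
  exact ((φ.boxProdCongr ψ).trans (boxProdIsoProdFamSum Fs)).trans
    (prodFamCongrLeft Fs finSumFinEquiv)

end Digraph

/-- Every finite connected digraph with at least two vertices and an unlooped vertex is
isomorphic to a Cartesian product of prime digraphs. -/
theorem exists_prime_factorization {V : Type u} [Fintype V] (G : Digraph V)
    (hconn : G.Connected) (hnt : Nontrivial V) (hul : ∃ v, ¬ G.Adj v v) :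
    ∃ k : ℕ, 1 ≤ k ∧ ∃ (W : Fin k → Type u) (Gs : ∀ i, Digraph (W i)),
      (∀ i, (Gs i).IsPrime) ∧ Nonempty (G.Iso (Digraph.prodFam Gs)) := by
  change G.HasPrimeFactorization
  induction h : Nat.card V using Nat.strong_induction_on generalizing V with
  | _ n ih =>
  by_cases hG : G.IsPrime
  · exact hG.hasPrimeFactorization
  obtain ⟨A, B, GA, GB, hA, hB, ⟨φ⟩⟩ :=
    Digraph.exists_iso_boxProd_of_not_isPrime hconn hnt hul hG
  obtain ⟨hconnA, hconnB⟩ := Digraph.connected_boxProd.mp (φ.connected_iff.mp hconn)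
  obtain ⟨hulA, hulB⟩ :=
    Digraph.exists_not_adj_self_boxProd.mp (φ.exists_not_adj_self_iff.mp hul)
  have : Finite (A × B) := .of_equiv V φ.toEquiv
  have : Finite A := .prod_left B
  have : Finite B := .prod_right A
  obtain ⟨hcardA, hcardB⟩ : Nat.card A < n ∧ Nat.card B < n :=
    h ▸ Nat.card_congr φ.toEquiv ▸ Nat.card_lt_card_prod
  have := Fintype.ofFinite A
  have := Fintype.ofFinite B
  exact .of_iso φ <|
    .boxProd (ih _ hcardA GA hconnA hA hulA rfl) (ih _ hcardB GB hconnB hB hulB rfl)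
end

section
/- Every connected digraph with loops G (vertex set possibly infinite) that has at least two vertices and at least one unlooped vertex is isomorphic to a weak Cartesian product of prime digraphs: there exist a nonempty index set I, a family (G_ι)_{ι∈I} of prime digraphs, and a vertex a of ∏_{ι∈I} G_ι such that G is isomorphic to the weak Cartesian product ∏^a_{ι∈I} G_ι. -/
/-!
A weak Cartesian decomposition of `G` is encoded by its coordinates: equivalence relations `R`
("same `R`-coordinate") such that every non-loop arc changes exactly one coordinate and can be
translated inside the fibres of that coordinate. Such a family exhibits `G` as the weak product
of its quotients. Families are preordered by refinement; along a chain the coordinate of an arc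
grows, and the unions again form a decomposition, because any two vertices are joined by a finite
walk (for loops, a walk to the unlooped vertex). By Zorn's lemma there is a maximal decomposition,
and its factors are prime: a splitting `G/R ≅ A □ B` into nontrivial factors would replace `R` by
the two pulled-back coordinates, a strictly finer decomposition.
-/

universe u

theorem SimpleGraph.Reachable.map_of_forall_adj {α β : Type*} {G : SimpleGraph α}
    {H : SimpleGraph β} (f : α → β) (hf : ∀ a b, G.Adj a b → H.Reachable (f a) (f b))
    {a b : α} (h : G.Reachable a b) : H.Reachable (f a) (f b) := by
  simp only [SimpleGraph.reachable_iff_reflTransGen] at hf h ⊢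
  exact Relation.ReflTransGen.lift' f hf _ _ h

theorem SimpleGraph.Walk.exists_dart_not_rel {V : Type*} {G : SimpleGraph V} {x y : V}
    (p : G.Walk x y) {r : Setoid V} (h : ¬r x y) : ∃ e ∈ p.darts, ¬r e.fst e.snd := by
  induction p with
  | nil => exact absurd (r.refl _) h
  | @cons a b _ hab p ih =>
    by_cases hr : r a b
    · obtain ⟨e, he, hre⟩ := ih fun h' => h (r.trans hr h')
      exact ⟨e, List.mem_cons_of_mem _ he, hre⟩
    · exact ⟨⟨(a, b), hab⟩, List.mem_cons_self, hr⟩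

theorem IsChain.exists_forall_of_forall_exists {α ι : Type*} [Preorder α] {C : Set α}
    (hC : IsChain (· ≤ ·) C) (hne : C.Nonempty) {s : Set ι} (hs : s.Finite)
    {P : ι → α → Prop} (hP : ∀ i ∈ s, ∀ a ∈ C, ∀ b ∈ C, a ≤ b → P i b → P i a)
    (h : ∀ a ∈ C, ∃ i ∈ s, P i a) :
    ∃ i ∈ s, ∀ a ∈ C, P i a := by
  classical
  by_contra! hall
  choose f hfC hf using hall
  have := hne.to_subtype
  have := hs.fintype
  obtain ⟨⟨b, hb⟩, hub⟩ := (directedOn_iff_directed.1 hC.directedOn).finset_le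
    (Finset.univ.image fun i : s => (⟨f i i.2, hfC i i.2⟩ : C))
  obtain ⟨i, hi, hPi⟩ := h b hb
  exact hf i hi (hP i hi _ (hfC i hi) b hb
    (hub _ (Finset.mem_image_of_mem _ (Finset.mem_univ (⟨i, hi⟩ : s)))) hPi)

namespace Digraph

section Decomposition

variable {V : Type*} {G : Digraph V} {D : Set (Setoid V)} {R : Setoid V} {u v w x y : V}

def AgreeOff (D : Set (Setoid V)) (R : Setoid V) (u v : V) : Prop :=
  ∀ R' ∈ D, R' ≠ R → R' u v

theorem AgreeOff.rfl : AgreeOff D R u u :=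
  fun R' _ _ => R'.refl u

theorem AgreeOff.symm (h : AgreeOff D R u v) : AgreeOff D R v u :=
  fun R' hR' hne => R'.symm (h R' hR' hne)

theorem AgreeOff.trans (h : AgreeOff D R u v) (h' : AgreeOff D R v w) : AgreeOff D R u w :=
  fun R' hR' hne => R'.trans (h R' hR' hne) (h' R' hR' hne)

theorem AgreeOff.eq_of_not_rel {R' : Setoid V} (h : AgreeOff D R u v) (hR' : R' ∈ D)
    (h' : ¬R' u v) : R' = R := by
  by_contra hne
  exact h' (h R' hR' hne)

structure IsSplice (D : Set (Setoid V)) (R : Setoid V) (v w x : V) : Prop where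
  rel : R v x
  agreeOff : AgreeOff D R w x

/-- For `c = d` the condition asks every vertex of the fibre `c` to be looped. -/
def factor (G : Digraph V) (D : Set (Setoid V)) (R : Setoid V) : Digraph (Quotient R) where
  Adj c d := ∀ u v, Quotient.mk R u = c → Quotient.mk R v = d → AgreeOff D R u v → G.Adj u v

theorem factor_not_adj_self (hv : ¬G.Adj v v) :
    ¬(factor G D R).Adj (Quotient.mk R v) (Quotient.mk R v) :=
  fun h => hv (h v v rfl rfl AgreeOff.rfl)

def coords (D : Set (Setoid V)) (v : V) (R : D) : Quotient (R : Setoid V) :=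
  Quotient.mk _ v

theorem prodFam_adj_coords_iff :
    (prodFam fun R : D => factor G D R).Adj (coords D u) (coords D v) ↔
    ∃ R ∈ D, AgreeOff D R u v ∧ (factor G D R).Adj (Quotient.mk R u) (Quotient.mk R v) := by
  constructor
  · rintro ⟨⟨R, hR⟩, hadj, hoff⟩
    exact ⟨R, hR, fun R' hR' hne => Quotient.eq.1 (hoff ⟨R', hR'⟩ fun h => hne congr($h.1)),
      hadj⟩
  · rintro ⟨R, hR, hag, hadj⟩
    exact Exists.intro ⟨R, hR⟩
      ⟨hadj, fun ⟨R', hR'⟩ hne => Quotient.eq.2 (hag R' hR' fun h => hne (Subtype.ext h))⟩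

/-- A set `D` of equivalence relations on the vertices, `R u v` read as "`u` and `v` have the same
`R`-coordinate", exhibiting `G` as the weak Cartesian product of the factors `factor G D R`. -/
structure IsDecomposition (G : Digraph V) (D : Set (Setoid V)) : Prop where
  ne_top : ∀ R ∈ D, R ≠ ⊤
  eq_of_forall_rel : ∀ u v, (∀ R ∈ D, R u v) → u = v
  exists_agreeOff : ∀ u v, G.shadow.Adj u v → ∃ R ∈ D, AgreeOff D R u v
  transfer : ∀ R ∈ D, ∀ u v w, G.shadow.Adj u v → AgreeOff D R u v → R u w →
    ∃ x, IsSplice D R v w x ∧ (G.Adj u v → G.Adj w x)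
  exists_loop_class : ∀ u, G.Adj u u → ∃ R ∈ D, ∀ w, R u w → G.Adj w w

namespace IsDecomposition

variable (hD : IsDecomposition G D)
include hD

theorem eq_of_rel_of_agreeOff (h : R u v) (h' : AgreeOff D R u v) : u = v :=
  hD.eq_of_forall_rel u v fun R' hR' => by
    by_cases hR'R : R' = R
    · exact hR'R ▸ h
    · exact h' R' hR' hR'R

theorem not_rel_of_agreeOff (h : AgreeOff D R u v) (huv : u ≠ v) : ¬R u v :=
  fun h' => huv (hD.eq_of_rel_of_agreeOff h' h)

theorem exists_not_rel (huv : u ≠ v) : ∃ R ∈ D, ¬R u v := by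
  by_contra! h
  exact huv (hD.eq_of_forall_rel u v h)

theorem eq_of_splice (hx : IsSplice D R v w x) (hy : IsSplice D R v w y) : x = y :=
  hD.eq_of_rel_of_agreeOff (R.trans (R.symm hx.rel) hy.rel) (hx.agreeOff.symm.trans hy.agreeOff)

/-- Splices are built along a walk from `u` to `v`, changing the `R`-coordinate one arc at
a time. -/
theorem exists_splice (hconn : G.Connected) (hR : R ∈ D) (u v : V) :
    ∃ x, IsSplice D R v u x := by
  suffices ∀ a b, G.shadow.Reachable a b → ∀ x, IsSplice D R a u x →
      ∃ y, IsSplice D R b u y from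
    this u v (hconn.preconnected u v) u ⟨R.refl u, AgreeOff.rfl⟩
  intro a b hab
  rw [SimpleGraph.reachable_iff_reflTransGen] at hab
  induction hab with
  | refl => exact fun x hx => ⟨x, hx⟩
  | @tail b c _ hbc ih =>
    intro x hx
    obtain ⟨y, hy⟩ := ih x hx
    obtain ⟨K, hK, hbcK⟩ := hD.exists_agreeOff b c hbc
    by_cases hKR : K = R
    · subst hKR
      obtain ⟨z, hz, -⟩ := hD.transfer K hK b c y hbc hbcK hy.rel
      exact ⟨z, hz.rel, hy.agreeOff.trans hz.agreeOff⟩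
    · exact ⟨y, R.trans (R.symm (hbcK R hR (Ne.symm hKR))) hy.rel, hy.agreeOff⟩

theorem exists_not_rel_of_mem (hR : R ∈ D) : ∃ a b, ¬R a b := by
  by_contra! h
  exact hD.ne_top R hR (Setoid.eq_top_iff.2 h)

theorem not_le_of_ne (hconn : G.Connected) {R' : Setoid V} (hR : R ∈ D) (hR' : R' ∈ D)
    (hne : R ≠ R') : ¬R ≤ R' := by
  intro hle
  obtain ⟨a, b, hab⟩ := hD.exists_not_rel_of_mem hR'
  obtain ⟨x, hx⟩ := hD.exists_splice hconn hR' a b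
  exact hab (R'.trans (hle (hx.agreeOff R hR hne)) (R'.symm hx.rel))


theorem factor_adj_mk (hR : R ∈ D) (h : G.Adj u v) (huv : u ≠ v) (hag : AgreeOff D R u v) :
    (factor G D R).Adj (Quotient.mk R u) (Quotient.mk R v) := by
  intro w x hw hx hwx
  obtain ⟨x', hx', hadj⟩ :=
    hD.transfer R hR u v w ⟨huv, Or.inl h⟩ hag (Quotient.eq.1 hw.symm)
  rw [← hD.eq_of_splice hx' ⟨Quotient.eq.1 hx.symm, hwx⟩]
  exact hadj h

theorem factor_shadow_adj_mk (hR : R ∈ D) (h : G.shadow.Adj u v) (hag : AgreeOff D R u v) :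
    (factor G D R).shadow.Adj (Quotient.mk R u) (Quotient.mk R v) :=
  ⟨fun h' => hD.not_rel_of_agreeOff hag h.1 (Quotient.eq.1 h'),
    h.2.imp (fun h' => hD.factor_adj_mk hR h' h.1 hag)
      fun h' => hD.factor_adj_mk hR h' h.1.symm hag.symm⟩

theorem factor_adj_self_mk (hloop : ∀ w, R u w → G.Adj w w) :
    (factor G D R).Adj (Quotient.mk R u) (Quotient.mk R u) := by
  intro w x hw hx hwx
  rw [← hD.eq_of_rel_of_agreeOff (R.trans (Quotient.eq.1 hw) (Quotient.eq.1 hx.symm)) hwx]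
  exact hloop w (Quotient.eq.1 hw.symm)

theorem adj_iff_exists_factor_adj :
    G.Adj u v ↔
      ∃ R ∈ D, AgreeOff D R u v ∧ (factor G D R).Adj (Quotient.mk R u) (Quotient.mk R v) := by
  refine ⟨fun h => ?_, fun ⟨R, _, hag, hadj⟩ => hadj u v rfl rfl hag⟩
  by_cases huv : u = v
  · subst huv
    obtain ⟨R, hR, hloop⟩ := hD.exists_loop_class u h
    exact ⟨R, hR, AgreeOff.rfl, hD.factor_adj_self_mk hloop⟩
  · obtain ⟨R, hR, hag⟩ := hD.exists_agreeOff u v ⟨huv, Or.inl h⟩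
    exact ⟨R, hR, hag, hD.factor_adj_mk hR h huv hag⟩

theorem factor_connected (hconn : G.Connected) (hR : R ∈ D) : (factor G D R).Connected := by
  have : Nonempty (Quotient R) := hconn.nonempty.map (Quotient.mk R)
  refine ⟨fun c d => ?_⟩
  obtain ⟨u, rfl⟩ := Quotient.exists_rep c
  obtain ⟨v, rfl⟩ := Quotient.exists_rep d
  refine (hconn.preconnected u v).map_of_forall_adj _ fun a b hab => ?_
  by_cases hmk : Quotient.mk R a = Quotient.mk R b
  · rw [hmk]
  obtain ⟨K, hK, hag⟩ := hD.exists_agreeOff a b hab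
  obtain rfl : R = K := hag.eq_of_not_rel hR fun h => hmk (Quotient.eq.2 h)
  exact (hD.factor_shadow_adj_mk hR hab hag).reachable

theorem factor_nontrivial (hR : R ∈ D) : Nontrivial (Quotient R) :=
  let ⟨_, _, hab⟩ := hD.exists_not_rel_of_mem hR
  ⟨⟨_, _, fun h => hab (Quotient.eq.1 h)⟩⟩


theorem adj_iff_prodFam_adj_coords :
    G.Adj u v ↔ (prodFam fun R : D => factor G D R).Adj (coords D u) (coords D v) :=
  hD.adj_iff_exists_factor_adj.trans prodFam_adj_coords_iff.symm

theorem coords_injective : Function.Injective (coords D) :=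
  fun u v h => hD.eq_of_forall_rel u v fun R hR => Quotient.eq.1 (congrFun h ⟨R, hR⟩)

theorem coords_mem_weakComponent (hconn : G.Connected) (v₀ v : V) :
    coords D v ∈ weakComponent (fun R : D => factor G D R) (coords D v₀) :=
  (hconn.preconnected v₀ v).map_of_forall_adj (G := G.shadow) (H := (prodFam _).shadow) (coords D)
    fun _ _ hab => SimpleGraph.Adj.reachable ⟨hD.coords_injective.ne hab.1,
      hab.2.imp hD.adj_iff_prodFam_adj_coords.1 hD.adj_iff_prodFam_adj_coords.1⟩

/-- The image of `coords D` is closed under changing one coordinate, hence contains the whole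
component. -/
theorem exists_coords_eq (hconn : G.Connected) {v₀ : V} {z : ∀ R : D, Quotient (R : Setoid V)}
    (hz : z ∈ weakComponent (fun R : D => factor G D R) (coords D v₀)) :
    ∃ v, coords D v = z := by
  replace hz := (SimpleGraph.reachable_iff_reflTransGen _ _).1 hz
  induction hz with
  | refl => exact ⟨v₀, rfl⟩
  | @tail y z _ hyz ih =>
    obtain ⟨u, rfl⟩ := ih
    obtain ⟨κ, hκ⟩ : ∃ κ, ∀ i, i ≠ κ → coords D u i = z i := by
      rcases hyz.2 with ⟨κ, -, h⟩ | ⟨κ, -, h⟩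
      exacts [⟨κ, h⟩, ⟨κ, fun i hi => (h i hi).symm⟩]
    obtain ⟨c, hc⟩ := Quotient.exists_rep (z κ)
    obtain ⟨x, hx⟩ := hD.exists_splice hconn κ.2 u c
    refine ⟨x, funext fun i => ?_⟩
    by_cases hi : i = κ
    · subst hi
      exact (Quotient.eq.2 (i.1.symm hx.rel)).trans hc
    · exact (Quotient.eq.2 (hx.agreeOff.symm i.1 i.2 fun h => hi (Subtype.ext h))).trans (hκ i hi)

theorem nonempty_iso_weakProd (hconn : G.Connected) (v₀ : V) :
    Nonempty (G.Iso (weakProd (fun R : D => factor G D R) (coords D v₀))) := by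
  let f : V → weakComponent (fun R : D => factor G D R) (coords D v₀) :=
    fun v => ⟨coords D v, hD.coords_mem_weakComponent hconn v₀ v⟩
  have hf : Function.Bijective f :=
    ⟨fun u v h => hD.coords_injective congr($h.1), fun ⟨_, hz⟩ =>
      let ⟨v, hv⟩ := hD.exists_coords_eq hconn hz
      ⟨v, Subtype.ext hv⟩⟩
  exact ⟨{ toEquiv := Equiv.ofBijective f hf
           map_rel_iff' := hD.adj_iff_prodFam_adj_coords.symm }⟩

end IsDecomposition

theorem shadow_adj_iff_of_iso {W : Type*} {H : Digraph W} (φ : G.Iso H) :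
    H.shadow.Adj (φ u) (φ v) ↔ G.shadow.Adj u v := by
  simp only [shadow, ne_eq, φ.injective.eq_iff, φ.map_rel_iff]

theorem agreeOff_comap_iff {W : Type*} {f : V → W} (hf : Function.Surjective f)
    {E : Set (Setoid W)} {S : Setoid W} :
    AgreeOff (Setoid.comap f '' E) (Setoid.comap f S) u v ↔ AgreeOff E S (f u) (f v) := by
  have hinj := Setoid.comap_injective f hf
  constructor
  · exact fun h S' hS' hne => h _ ⟨S', hS', rfl⟩ (hinj.ne hne)
  · rintro h _ ⟨S', hS', rfl⟩ hne
    exact h S' hS' (ne_of_apply_ne _ hne)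

theorem IsDecomposition.comap {W : Type*} {H : Digraph W} {E : Set (Setoid W)} (φ : G.Iso H)
    (hE : IsDecomposition H E) : IsDecomposition G (Setoid.comap φ '' E) where
  ne_top := by
    rintro _ ⟨S, hS, rfl⟩ h
    refine hE.ne_top S hS (Setoid.eq_top_iff.2 fun a b => ?_)
    have := Setoid.eq_top_iff.1 h (φ.symm a) (φ.symm b)
    rwa [Setoid.comap_rel, RelIso.apply_symm_apply, RelIso.apply_symm_apply] at this
  eq_of_forall_rel u v h := φ.injective (hE.eq_of_forall_rel _ _ fun S hS => h _ ⟨S, hS, rfl⟩)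
  exists_agreeOff u v h := by
    obtain ⟨S, hS, hag⟩ := hE.exists_agreeOff _ _ ((shadow_adj_iff_of_iso φ).2 h)
    exact ⟨_, ⟨S, hS, rfl⟩, (agreeOff_comap_iff φ.surjective).2 hag⟩
  transfer := by
    rintro _ ⟨S, hS, rfl⟩ u v w h hag huw
    obtain ⟨y, hy, hadj⟩ := hE.transfer S hS _ _ (φ w) ((shadow_adj_iff_of_iso φ).2 h)
      ((agreeOff_comap_iff φ.surjective).1 hag) huw
    refine ⟨φ.symm y, ⟨?_, (agreeOff_comap_iff φ.surjective).2 ?_⟩, fun h' => ?_⟩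
    · simpa [Setoid.comap_rel] using hy.rel
    · simpa using hy.agreeOff
    · simpa using φ.map_rel_iff.1 (by simpa using hadj (φ.map_rel_iff.2 h'))
  exists_loop_class u h := by
    obtain ⟨S, hS, hloop⟩ := hE.exists_loop_class (φ u) (φ.map_rel_iff.2 h)
    exact ⟨_, ⟨S, hS, rfl⟩, fun w hw => φ.map_rel_iff.1 (hloop _ hw)⟩

theorem agreeOff_pair_left {R₁ R₂ : Setoid V} (hne : R₁ ≠ R₂) :
    AgreeOff {R₁, R₂} R₁ u v ↔ R₂ u v :=
  ⟨fun h => h R₂ (Or.inr rfl) hne.symm,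
    by rintro h _ (rfl | rfl) hne'; exacts [absurd rfl hne', h]⟩

theorem agreeOff_pair_right {R₁ R₂ : Setoid V} (hne : R₁ ≠ R₂) :
    AgreeOff {R₁, R₂} R₂ u v ↔ R₁ u v :=
  ⟨fun h => h R₁ (Or.inl rfl) hne,
    by rintro h _ (rfl | rfl) hne'; exacts [h, absurd rfl hne']⟩

end Decomposition

section BoxProd

variable {A B : Type*} {GA : Digraph A} {GB : Digraph B} [Nontrivial A] [Nontrivial B]

theorem ker_fst_ne_ker_snd : Setoid.ker (Prod.fst : A × B → A) ≠ Setoid.ker Prod.snd := by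
  obtain ⟨a, a', ha⟩ := exists_pair_ne A
  obtain ⟨b⟩ := ‹Nontrivial B›.to_nonempty
  intro h
  have : Setoid.ker Prod.snd (a, b) (a', b) := rfl
  rw [← h] at this
  exact ha this

theorem isDecomposition_boxProd :
    IsDecomposition (GA.boxProd GB) {Setoid.ker Prod.fst, Setoid.ker Prod.snd} where
  ne_top := by
    rintro _ (rfl | rfl) h
    · obtain ⟨a, a', ha⟩ := exists_pair_ne A
      obtain ⟨b⟩ := ‹Nontrivial B›.to_nonempty
      exact ha (Setoid.eq_top_iff.1 h (a, b) (a', b))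
    · obtain ⟨b, b', hb⟩ := exists_pair_ne B
      obtain ⟨a⟩ := ‹Nontrivial A›.to_nonempty
      exact hb (Setoid.eq_top_iff.1 h (a, b) (a, b'))
  eq_of_forall_rel p q h := Prod.ext (h _ (Or.inl rfl)) (h _ (Or.inr rfl))
  exists_agreeOff p q h := by
    rcases h.2 with (⟨-, h⟩ | ⟨h, -⟩) | (⟨-, h⟩ | ⟨h, -⟩)
    · exact ⟨_, Or.inl rfl, (agreeOff_pair_left ker_fst_ne_ker_snd).2 h⟩
    · exact ⟨_, Or.inr rfl, (agreeOff_pair_right ker_fst_ne_ker_snd).2 h⟩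
    · exact ⟨_, Or.inl rfl, (agreeOff_pair_left ker_fst_ne_ker_snd).2 h.symm⟩
    · exact ⟨_, Or.inr rfl, (agreeOff_pair_right ker_fst_ne_ker_snd).2 h.symm⟩
  transfer := by
    rintro _ (rfl | rfl) p q w ⟨hpq, -⟩ hag hpw
    · have hag : p.2 = q.2 := (agreeOff_pair_left ker_fst_ne_ker_snd).1 hag
      refine ⟨(q.1, w.2), ⟨rfl, (agreeOff_pair_left ker_fst_ne_ker_snd).2 rfl⟩, ?_⟩
      rintro (⟨h, -⟩ | ⟨h, -⟩)
      · exact Or.inl ⟨(show p.1 = w.1 from hpw) ▸ h, rfl⟩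
      · exact absurd (Prod.ext h hag) hpq
    · have hag : p.1 = q.1 := (agreeOff_pair_right ker_fst_ne_ker_snd).1 hag
      refine ⟨(w.1, q.2), ⟨rfl, (agreeOff_pair_right ker_fst_ne_ker_snd).2 rfl⟩, ?_⟩
      rintro (⟨-, h⟩ | ⟨-, h⟩)
      · exact absurd (Prod.ext hag h) hpq
      · exact Or.inr ⟨rfl, (show p.2 = w.2 from hpw) ▸ h⟩
  exists_loop_class p h := by
    rcases h with ⟨h, -⟩ | ⟨-, h⟩
    · exact ⟨_, Or.inl rfl, fun w (hw : p.1 = w.1) => Or.inl ⟨hw ▸ h, rfl⟩⟩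
    · exact ⟨_, Or.inr rfl, fun w (hw : p.2 = w.2) => Or.inr ⟨rfl, hw ▸ h⟩⟩

end BoxProd

section Refinement

variable {V : Type*} {G : Digraph V} {D : Set (Setoid V)} {R : Setoid V} {u v : V}
  {E : Set (Setoid (Quotient R))}

def refineAt (D : Set (Setoid V)) (R : Setoid V) (E : Set (Setoid (Quotient R))) :
    Set (Setoid V) :=
  D \ {R} ∪ Setoid.comap (Quotient.mk R) '' E

theorem le_comap_mk (S : Setoid (Quotient R)) : R ≤ Setoid.comap (Quotient.mk R) S :=
  fun _ _ h => by rw [Setoid.comap_rel, Quotient.eq.2 h]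

theorem IsDecomposition.rel_iff_forall_comap_mk (hE : IsDecomposition (factor G D R) E) :
    R u v ↔ ∀ S ∈ E, Setoid.comap (Quotient.mk R) S u v :=
  ⟨fun h S _ => le_comap_mk S h, fun h => Quotient.eq.1 (hE.eq_of_forall_rel _ _ h)⟩

variable (hconn : G.Connected) (hD : IsDecomposition G D) (hR : R ∈ D)
  (hE : IsDecomposition (factor G D R) E)
include hconn hD hR

theorem comap_mk_ne (S : Setoid (Quotient R)) {R' : Setoid V} (hR' : R' ∈ D) (hne : R' ≠ R) :
    Setoid.comap (Quotient.mk R) S ≠ R' :=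
  fun h => hD.not_le_of_ne hconn hR hR' hne.symm (h ▸ le_comap_mk S)

theorem agreeOff_refineAt_comap_mk_iff {S : Setoid (Quotient R)} :
    AgreeOff (refineAt D R E) (Setoid.comap (Quotient.mk R) S) u v ↔
      AgreeOff D R u v ∧ AgreeOff E S (Quotient.mk R u) (Quotient.mk R v) := by
  have hinj := Setoid.comap_injective _ (Quotient.mk_surjective (s := R))
  constructor
  · intro h
    exact ⟨fun R' hR' hne =>
        h R' (Or.inl ⟨hR', hne⟩) (comap_mk_ne hconn hD hR S hR' hne).symm,
      fun S' hS' hne => h _ (Or.inr ⟨S', hS', rfl⟩) (hinj.ne hne)⟩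
  · rintro ⟨h, h'⟩ Q (⟨hQ, hQR⟩ | ⟨S', hS', rfl⟩) hne
    · exact h Q hQ hQR
    · exact h' S' hS' (ne_of_apply_ne _ hne)

include hE

theorem agreeOff_refineAt_iff {R' : Setoid V} (hR' : R' ∈ D) (hne : R' ≠ R) :
    AgreeOff (refineAt D R E) R' u v ↔ AgreeOff D R' u v := by
  constructor
  · intro h Q hQ hQne
    by_cases hQR : Q = R
    · subst hQR
      exact hE.rel_iff_forall_comap_mk.2 fun S hS =>
        h _ (Or.inr ⟨S, hS, rfl⟩) (comap_mk_ne hconn hD hR S hR' hne)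
    · exact h Q (Or.inl ⟨hQ, hQR⟩) hQne
  · rintro h Q (⟨hQ, -⟩ | ⟨S, hS, rfl⟩) hQne
    · exact h Q hQ hQne
    · exact le_comap_mk S (h R hR hne.symm)

theorem isDecomposition_refineAt : IsDecomposition G (refineAt D R E) where
  ne_top := by
    rintro _ (⟨hQ, -⟩ | ⟨S, hS, rfl⟩) h
    · exact hD.ne_top _ hQ h
    · refine hE.ne_top S hS (Setoid.eq_top_iff.2 fun c d => ?_)
      obtain ⟨a, rfl⟩ := Quotient.exists_rep c
      obtain ⟨b, rfl⟩ := Quotient.exists_rep d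
      exact Setoid.eq_top_iff.1 h a b
  eq_of_forall_rel u v h := hD.eq_of_forall_rel u v fun Q hQ => by
    by_cases hQR : Q = R
    · exact hQR ▸ hE.rel_iff_forall_comap_mk.2 fun S hS => h _ (Or.inr ⟨S, hS, rfl⟩)
    · exact h Q (Or.inl ⟨hQ, hQR⟩)
  exists_agreeOff u v h := by
    obtain ⟨K, hK, hag⟩ := hD.exists_agreeOff u v h
    by_cases hKR : K = R
    · subst hKR
      obtain ⟨S, hS, hagS⟩ := hE.exists_agreeOff _ _ (hD.factor_shadow_adj_mk hK h hag)
      exact ⟨_, Or.inr ⟨S, hS, rfl⟩,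
        (agreeOff_refineAt_comap_mk_iff hconn hD hK).2 ⟨hag, hagS⟩⟩
    · exact ⟨K, Or.inl ⟨hK, hKR⟩, (agreeOff_refineAt_iff hconn hD hR hE hK hKR).2 hag⟩
  transfer := by
    rintro _ (⟨hQ, hQR⟩ | ⟨S, hS, rfl⟩) u v w h hag huw
    · obtain ⟨x, hx, hadj⟩ :=
        hD.transfer _ hQ u v w h ((agreeOff_refineAt_iff hconn hD hR hE hQ hQR).1 hag) huw
      exact ⟨x, ⟨hx.rel, (agreeOff_refineAt_iff hconn hD hR hE hQ hQR).2 hx.agreeOff⟩, hadj⟩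
    · obtain ⟨hagR, hagS⟩ := (agreeOff_refineAt_comap_mk_iff hconn hD hR).1 hag
      obtain ⟨c, hc, hadj⟩ :=
        hE.transfer S hS _ _ _ (hD.factor_shadow_adj_mk hR h hagR) hagS huw
      obtain ⟨c, rfl⟩ := Quotient.exists_rep c
      obtain ⟨x, hx⟩ := hD.exists_splice hconn hR w c
      rw [Quotient.eq.2 hx.rel] at hc hadj
      exact ⟨x, ⟨hc.rel,
        (agreeOff_refineAt_comap_mk_iff hconn hD hR).2 ⟨hx.agreeOff, hc.agreeOff⟩⟩,
        fun h' => hadj (hD.factor_adj_mk hR h' h.1 hagR) w x rfl rfl hx.agreeOff⟩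
  exists_loop_class u h := by
    obtain ⟨K, hK, hloop⟩ := hD.exists_loop_class u h
    by_cases hKR : K = R
    · subst hKR
      obtain ⟨S, hS, hloopS⟩ := hE.exists_loop_class _ (hD.factor_adj_self_mk hloop)
      exact ⟨_, Or.inr ⟨S, hS, rfl⟩, fun w hw => hloopS _ hw w w rfl rfl AgreeOff.rfl⟩
    · exact ⟨K, Or.inl ⟨hK, hKR⟩, hloop⟩

end Refinement

theorem isDecomposition_singleton_bot {V : Type*} {G : Digraph V} [Nontrivial V] :
    IsDecomposition G {⊥} where
  ne_top := by
    rintro _ rfl h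
    obtain ⟨a, b, hab⟩ := exists_pair_ne V
    exact hab (Setoid.eq_top_iff.1 h a b)
  eq_of_forall_rel u v h := h ⊥ rfl
  exists_agreeOff _ _ _ := ⟨⊥, rfl, fun _ hR' hne => absurd hR' hne⟩
  transfer := by
    rintro _ rfl u v w - - (rfl : u = w)
    exact ⟨v, ⟨rfl, fun _ hR' hne => absurd hR' hne⟩, id⟩
  exists_loop_class u h := ⟨⊥, rfl, fun _ (hw : u = _) => hw ▸ h⟩

structure Decomposition {V : Type*} (G : Digraph V) where
  carrier : Set (Setoid V)
  isDecomposition : IsDecomposition G carrier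

namespace Decomposition

variable {V : Type*} {G : Digraph V}

/-- `D ≤ D'` when `D'` is finer: every coordinate of `D` is the meet of the coordinates of `D'`
above it. -/
instance : Preorder (Decomposition G) where
  le D D' := ∀ R ∈ D.carrier, ∀ x y, ¬R x y → ∃ R' ∈ D'.carrier, R ≤ R' ∧ ¬R' x y
  le_refl _ R hR _ _ h := ⟨R, hR, le_rfl, h⟩
  le_trans _ _ _ h₁₂ h₂₃ R hR x y h := by
    obtain ⟨R', hR', hle, h'⟩ := h₁₂ R hR x y h
    obtain ⟨R'', hR'', hle', h''⟩ := h₂₃ R' hR' x y h'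
    exact ⟨R'', hR'', hle.trans hle', h''⟩

section Refinement

variable (hconn : G.Connected) {M : Decomposition G} {R : Setoid V} (hR : R ∈ M.carrier)
  {E : Set (Setoid (Quotient R))} (hE : IsDecomposition (factor G M.carrier R) E)

def refinement : Decomposition G :=
  ⟨refineAt M.carrier R E, isDecomposition_refineAt hconn M.isDecomposition hR hE⟩

include hconn hR hE

theorem le_refinement : M ≤ refinement hconn hR hE := by
  intro R' hR' x y h
  by_cases hR'R : R' = R
  · subst hR'R
    obtain ⟨S, hS, hxy⟩ : ∃ S ∈ E, ¬Setoid.comap (Quotient.mk R') S x y := by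
      by_contra! h'
      exact h (hE.rel_iff_forall_comap_mk.2 h')
    exact ⟨_, Or.inr ⟨S, hS, rfl⟩, le_comap_mk S, hxy⟩
  · exact ⟨R', Or.inl ⟨hR', hR'R⟩, le_rfl, h⟩

theorem not_refinement_le {S₁ S₂ : Setoid (Quotient R)} (hS₁ : S₁ ∈ E) (hS₂ : S₂ ∈ E)
    (hne : S₁ ≠ S₂) : ¬refinement hconn hR hE ≤ M := by
  intro hle
  have hS₁' : Setoid.comap (Quotient.mk R) S₁ ∈ (refinement hconn hR hE).carrier :=
    Or.inr ⟨S₁, hS₁, rfl⟩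
  obtain ⟨a, b, hab⟩ := (refinement hconn hR hE).isDecomposition.exists_not_rel_of_mem hS₁'
  obtain ⟨R', hR', hle', -⟩ := hle _ hS₁' a b hab
  obtain rfl : R' = R := by
    by_contra hne'
    exact M.isDecomposition.not_le_of_ne hconn hR hR' (Ne.symm hne') ((le_comap_mk S₁).trans hle')
  refine hE.not_le_of_ne (M.isDecomposition.factor_connected hconn hR) hS₁ hS₂ hne
    fun c d hcd => ?_
  obtain ⟨x, rfl⟩ := Quotient.exists_rep c
  obtain ⟨y, rfl⟩ := Quotient.exists_rep d
  exact le_comap_mk S₂ (hle' hcd)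

end Refinement

section Limit

variable {D D' : Decomposition G} {R : Setoid V} {u v w x y : V}

/-- The coordinate of `D` in which `u` and `v` differ, meaningful when they are adjacent in the
shadow. -/
noncomputable def coord (D : Decomposition G) (u v : V) : Setoid V :=
  Classical.epsilon fun R => R ∈ D.carrier ∧ ¬R u v

theorem coord_mem_not_rel (huv : u ≠ v) : D.coord u v ∈ D.carrier ∧ ¬D.coord u v u v :=
  Classical.epsilon_spec (p := fun R => R ∈ D.carrier ∧ ¬R u v)
    (let ⟨R, hR, h⟩ := D.isDecomposition.exists_not_rel huv; ⟨R, hR, h⟩)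

theorem agreeOff_coord (h : G.shadow.Adj u v) : AgreeOff D.carrier (D.coord u v) u v := by
  obtain ⟨K, hK, hag⟩ := D.isDecomposition.exists_agreeOff u v h
  rwa [← hag.eq_of_not_rel (coord_mem_not_rel h.1).1 (coord_mem_not_rel h.1).2] at hag

theorem coord_eq (h : G.shadow.Adj u v) (hR : R ∈ D.carrier) (hr : ¬R u v) : D.coord u v = R :=
  ((agreeOff_coord h).eq_of_not_rel hR hr).symm

theorem coord_eq_of_le_coord (h : G.shadow.Adj u v) (hR : R ∈ D.carrier)
    (hle : R ≤ D'.coord u v) : D.coord u v = R :=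
  coord_eq h hR fun hr => (coord_mem_not_rel h.1).2 (hle hr)

theorem coord_mono (hle : D ≤ D') (h : G.shadow.Adj u v) : D.coord u v ≤ D'.coord u v := by
  obtain ⟨R', hR', hle', hr⟩ := hle _ (coord_mem_not_rel h.1).1 u v (coord_mem_not_rel h.1).2
  rwa [coord_eq h hR' hr]

theorem coord_ne_coord_of_le (hle : D ≤ D') (h : G.shadow.Adj u v) (h' : G.shadow.Adj x y)
    (hne : D.coord u v ≠ D.coord x y) : D'.coord u v ≠ D'.coord x y := fun heq =>
  hne (coord_eq_of_le_coord h' (coord_mem_not_rel h.1).1 (heq ▸ coord_mono hle h)).symm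

theorem isSplice_coord_of_le (hle : D ≤ D') (h : G.shadow.Adj u v) (huw : D.coord u v u w)
    (hy : IsSplice D'.carrier (D'.coord u v) v w y) : IsSplice D.carrier (D.coord u v) v w y := by
  constructor
  · by_contra hvy
    obtain ⟨R', hR', hle', hr⟩ := hle _ (coord_mem_not_rel h.1).1 v y hvy
    by_cases hR'c : R' = D'.coord u v
    · exact hr (hR'c ▸ hy.rel)
    · exact hr (R'.trans (R'.trans (R'.symm (agreeOff_coord h R' hR' hR'c)) (hle' huw))
        (hy.agreeOff R' hR' hR'c))
  · intro R hR hne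
    by_contra hwy
    obtain ⟨R', hR', hle', hr⟩ := hle R hR w y hwy
    obtain rfl : R' = D'.coord u v := by
      by_contra hR'c
      exact hr (hy.agreeOff R' hR' hR'c)
    exact (coord_mem_not_rel h.1).2 (hle' (agreeOff_coord h R hR hne))

variable {C : Set (Decomposition G)} (hC : IsChain (· ≤ ·) C) (hne : C.Nonempty)

def limCoord (e : G.shadow.Dart) : Setoid V where
  r x y := ∃ D ∈ C, D.coord e.fst e.snd x y
  iseqv :=
    { refl x := let ⟨D, hD⟩ := hne; ⟨D, hD, Setoid.refl' _ x⟩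
      symm := fun ⟨D, hD, h⟩ => ⟨D, hD, Setoid.symm' _ h⟩
      trans := fun ⟨D₁, hD₁, h₁⟩ ⟨D₂, hD₂, h₂⟩ => by
        rcases hC.total hD₁ hD₂ with hle | hle
        · exact ⟨D₂, hD₂, Setoid.trans' _ (coord_mono hle e.adj h₁) h₂⟩
        · exact ⟨D₁, hD₁, Setoid.trans' _ h₁ (coord_mono hle e.adj h₂)⟩ }

def limSet : Set (Setoid V) :=
  Set.range (limCoord hC hne)

theorem coord_le_limCoord (hD : D ∈ C) (e : G.shadow.Dart) :
    D.coord e.fst e.snd ≤ limCoord hC hne e :=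
  fun _ _ h => ⟨D, hD, h⟩

theorem not_limCoord_rel (e : G.shadow.Dart) : ¬limCoord hC hne e e.fst e.snd :=
  fun ⟨_, _, h⟩ => (coord_mem_not_rel e.adj.1).2 h

theorem exists_coord_ne_of_limCoord_ne {e e' : G.shadow.Dart}
    (h : limCoord hC hne e ≠ limCoord hC hne e') :
    ∃ D ∈ C, D.coord e.fst e.snd ≠ D.coord e'.fst e'.snd := by
  by_contra! h'
  exact h (Setoid.ext fun x y => exists_congr fun D => and_congr_right fun hD => by rw [h' D hD])

theorem agreeOff_limCoord (e : G.shadow.Dart) :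
    AgreeOff (limSet hC hne) (limCoord hC hne e) e.fst e.snd := by
  rintro _ ⟨e', rfl⟩ hne'
  obtain ⟨D, hD, hD'⟩ := exists_coord_ne_of_limCoord_ne hC hne hne'
  exact ⟨D, hD, agreeOff_coord e.adj _ (coord_mem_not_rel e'.adj.1).1 hD'⟩

theorem exists_transfer_limSet {T : Setoid V} (hT : T ∈ limSet hC hne) (h : G.shadow.Adj u v)
    (hag : AgreeOff (limSet hC hne) T u v) (huw : T u w) :
    ∃ x, IsSplice (limSet hC hne) T v w x ∧ (G.Adj u v → G.Adj w x) := by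
  let e : G.shadow.Dart := ⟨(u, v), h⟩
  obtain rfl : limCoord hC hne e = T := hag.eq_of_not_rel ⟨e, rfl⟩ (not_limCoord_rel hC hne e)
  obtain ⟨D₀, hD₀, huw₀⟩ := huw
  obtain ⟨x, hx, hadj⟩ := D₀.isDecomposition.transfer _ (coord_mem_not_rel h.1).1 u v w h
    (agreeOff_coord h) huw₀
  refine ⟨x, ⟨⟨D₀, hD₀, hx.rel⟩, ?_⟩, hadj⟩
  rintro _ ⟨e', rfl⟩ hne'
  obtain ⟨D₁, hD₁, hne₁⟩ := exists_coord_ne_of_limCoord_ne hC hne hne'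
  obtain ⟨D, hD, hD₀D, hD₁D⟩ := hC.directedOn D₀ hD₀ D₁ hD₁
  obtain ⟨y, hy, -⟩ := D.isDecomposition.transfer _ (coord_mem_not_rel h.1).1 u v w h
    (agreeOff_coord h) (coord_mono hD₀D h huw₀)
  obtain rfl := D₀.isDecomposition.eq_of_splice hx (isSplice_coord_of_le hD₀D h huw₀ hy)
  exact ⟨D, hD, hy.agreeOff _ (coord_mem_not_rel e'.adj.1).1
    (coord_ne_coord_of_le hD₁D e'.adj h hne₁)⟩

variable (hconn : G.Connected)
include hconn

/-- This says `D ≤ ⟨limSet hC hne, _⟩`, before the limit is known to be a decomposition. -/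
theorem exists_limCoord_of_le (hD : D ∈ C) (hR : R ∈ D.carrier) (hxy : ¬R x y) :
    ∃ T ∈ limSet hC hne, R ≤ T ∧ ¬T x y := by
  obtain ⟨p⟩ := hconn.preconnected x y
  obtain ⟨e, -, he⟩ := (hC.mono Set.inter_subset_left).exists_forall_of_forall_exists
    (C := C ∩ Set.Ici D) ⟨D, hD, Set.self_mem_Ici⟩ p.darts.finite_toSet
    (P := fun e D' => R ≤ D'.coord e.fst e.snd ∧ ¬D'.coord e.fst e.snd x y)
    (fun e _ D₁ ⟨_, hD₁⟩ D₂ _ hle ⟨hR₂, hr₂⟩ =>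
      ⟨coord_eq_of_le_coord e.adj hR hR₂ ▸ coord_mono hD₁ e.adj,
        fun hr => hr₂ (coord_mono hle e.adj hr)⟩)
    (fun D' ⟨_, hD'⟩ => by
      obtain ⟨R', hR', hle, hr⟩ := hD' R hR x y hxy
      obtain ⟨e, he, hre⟩ := p.exists_dart_not_rel hr
      exact ⟨e, he, by rw [coord_eq e.adj hR' hre]; exact ⟨hle, hr⟩⟩)
  refine ⟨_, ⟨e, rfl⟩,
    (he D ⟨hD, Set.self_mem_Ici⟩).1.trans (coord_le_limCoord hC hne hD e), ?_⟩
  rintro ⟨D', hD', hr⟩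
  rcases hC.total hD hD' with hle | hle
  · exact (he D' ⟨hD', hle⟩).2 hr
  · exact (he D ⟨hD, Set.self_mem_Ici⟩).2 (coord_mono hle e.adj hr)

/-- A loop class of the limit is found along a walk to an unlooped vertex. -/
theorem exists_loop_class_limSet {v₀ : V} (hv₀ : ¬G.Adj v₀ v₀) (hu : G.Adj u u) :
    ∃ T ∈ limSet hC hne, ∀ w, T u w → G.Adj w w := by
  obtain ⟨p⟩ := hconn.preconnected u v₀
  obtain ⟨e, -, he⟩ := hC.exists_forall_of_forall_exists hne p.darts.finite_toSet
    (P := fun e D => ∀ w, D.coord e.fst e.snd u w → G.Adj w w)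
    (fun e _ D₁ _ D₂ _ hle h w hw => h w (coord_mono hle e.adj hw))
    (fun D _ => by
      obtain ⟨R, hR, hloop⟩ := D.isDecomposition.exists_loop_class u hu
      obtain ⟨e, he, hre⟩ := p.exists_dart_not_rel fun h => hv₀ (hloop v₀ h)
      exact ⟨e, he, by rwa [coord_eq e.adj hR hre]⟩)
  exact ⟨_, ⟨e, rfl⟩, fun w ⟨D, hD, hw⟩ => he D hD w hw⟩

theorem isDecomposition_limSet {v₀ : V} (hv₀ : ¬G.Adj v₀ v₀) :
    IsDecomposition G (limSet hC hne) where
  ne_top := by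
    rintro _ ⟨e, rfl⟩ h
    exact not_limCoord_rel hC hne e (Setoid.eq_top_iff.1 h _ _)
  eq_of_forall_rel u v h := by
    obtain ⟨D, hD⟩ := hne
    refine D.isDecomposition.eq_of_forall_rel u v fun R hR => ?_
    by_contra hr
    obtain ⟨T, hT, -, hT'⟩ := exists_limCoord_of_le hC ⟨D, hD⟩ hconn hD hR hr
    exact hT' (h T hT)
  exists_agreeOff u v h :=
    ⟨_, ⟨⟨(u, v), h⟩, rfl⟩, agreeOff_limCoord hC hne ⟨(u, v), h⟩⟩
  transfer _ hT _ _ _ h hag huw := exists_transfer_limSet hC hne hT h hag huw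
  exists_loop_class _ hu := exists_loop_class_limSet hC hne hconn hv₀ hu

end Limit

theorem exists_isMax [Nontrivial V] (hconn : G.Connected) {v₀ : V} (hv₀ : ¬G.Adj v₀ v₀) :
    ∃ M : Decomposition G, IsMax M := by
  have : Nonempty (Decomposition G) := ⟨⟨{⊥}, isDecomposition_singleton_bot⟩⟩
  exact zorn_le_nonempty fun C hC hne =>
    ⟨⟨limSet hC hne, isDecomposition_limSet hC hne hconn hv₀⟩,
      fun _ hD _ hR _ _ hxy => exists_limCoord_of_le hC hne hconn hD hR hxy⟩

theorem isPrime_factor_of_isMax {V : Type u} {G : Digraph V} (hconn : G.Connected) {v₀ : V}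
    (hv₀ : ¬G.Adj v₀ v₀) {M : Decomposition G} (hM : IsMax M) {R : Setoid V}
    (hR : R ∈ M.carrier) : (factor G M.carrier R).IsPrime := by
  refine ⟨M.isDecomposition.factor_connected hconn hR, M.isDecomposition.factor_nontrivial hR,
    ⟨_, factor_not_adj_self hv₀⟩, fun {A B} GA GB ⟨ψ⟩ => ?_⟩
  by_contra! h
  have : Nontrivial A := h.1 ⟨(ψ (Quotient.mk R v₀)).1⟩
  have : Nontrivial B := h.2 ⟨(ψ (Quotient.mk R v₀)).2⟩
  have hE := (isDecomposition_boxProd (GA := GA) (GB := GB)).comap ψ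
  exact not_refinement_le hconn hR hE ⟨_, Or.inl rfl, rfl⟩ ⟨_, Or.inr rfl, rfl⟩
    ((Setoid.comap_injective ψ ψ.surjective).ne ker_fst_ne_ker_snd)
    (hM (le_refinement hconn hR hE))

end Decomposition

end Digraph

/-- Every connected digraph (possibly infinite) with at least two vertices and an
unlooped vertex is isomorphic to a weak Cartesian product of prime digraphs. -/
theorem exists_weak_prime_factorization {V : Type u} (G : Digraph V)
    (hconn : G.Connected) (hnt : Nontrivial V) (hul : ∃ v, ¬ G.Adj v v) :
    ∃ (I : Type u) (_ : Nonempty I) (W : I → Type u) (Gs : ∀ i, Digraph (W i))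
      (a : ∀ i, W i),
      (∀ i, (Gs i).IsPrime) ∧ Nonempty (G.Iso (Digraph.weakProd Gs a)) := by
  obtain ⟨v₀, hv₀⟩ := hul
  obtain ⟨M, hM⟩ := Digraph.Decomposition.exists_isMax hconn hv₀
  obtain ⟨a, b, hab⟩ := exists_pair_ne V
  obtain ⟨R₀, hR₀, -⟩ := M.isDecomposition.exists_not_rel hab
  exact ⟨M.carrier, ⟨⟨R₀, hR₀⟩⟩, fun R => Quotient R.1, fun R => G.factor M.carrier R,
    Digraph.coords M.carrier v₀,
    fun R => Digraph.Decomposition.isPrime_factor_of_isMax hconn hv₀ hM R.2,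
    M.isDecomposition.nonempty_iso_weakProd hconn v₀⟩
end

section
/- The number of nontrivial factors of a Cartesian product is bounded by the minimum degree of its shadow: if G = ∏_{i∈Fin k} G_i is a Cartesian product of digraphs each of which is connected and has at least two vertices, then every vertex of G has at least k distinct neighbors in the shadow S(G); in particular k is at most the minimum degree of S(G). -/
universe u

/-- Every vertex of a Cartesian product of `k` connected nontrivial digraphs has at
least `k` distinct neighbors in the shadow; in particular `k` is at most the minimum
degree of the shadow. -/
theorem card_factors_le_min_degree {k : ℕ} {V : Fin k → Type*} (G : ∀ i, Digraph (V i))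
    (hconn : ∀ i, (G i).Connected) (hnt : ∀ i, Nontrivial (V i)) (v : ∀ i, V i) :
    ∃ f : Fin k → (∀ i, V i), Function.Injective f ∧
      ∀ j, (Digraph.prodFam G).shadow.Adj v (f j) := by
  -- For each i, find a shadow-neighbor of `v i` in `G i`.
  have hnb : ∀ i, ∃ w : V i, (G i).shadow.Adj (v i) w := by
    intro i
    obtain ⟨u, hu⟩ := exists_ne (v i)
    have hr : (G i).shadow.Reachable (v i) u := (hconn i).preconnected _ _
    obtain ⟨p⟩ := hr
    cases p with
    | nil => exact absurd rfl hu.symm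
    | cons h _ => exact ⟨_, h⟩
  choose w hw using hnb
  refine ⟨fun j => Function.update v j (w j), ?_, ?_⟩
  · intro j j' hjj'
    by_contra hne
    have h1 := congrFun hjj' j
    simp only [Function.update_self, Function.update_of_ne hne] at h1
    exact (hw j).ne h1.symm
  · intro j
    have hne : v ≠ Function.update v j (w j) := by
      intro h
      have := congrFun h j
      rw [Function.update_self] at this
      exact (hw j).ne this
    refine ⟨hne, ?_⟩
    rcases (hw j).2 with h | h
    · left
      exact ⟨j, by simpa using h, fun i hi => (Function.update_of_ne hi _ _).symm⟩
    · right
      exact ⟨j, by simpa using h, fun i hi => Function.update_of_ne hi _ _⟩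
end

section
/- The prime factorization of the shadow refines the prime factorization of a directed graph: let G be a finite connected digraph without loops having at least two vertices, suppose G ≅ ∏_{i∈Fin k} G_i where each G_i is a prime digraph, and suppose S(G) ≅ ∏_{j∈J} Z_j where J is a finite index set and each Z_j is a prime simple graph. Then there is a partition J = J_1 ∪ ⋯ ∪ J_k into pairwise disjoint sets such that S(G_i) ≅ ∏_{j∈J_i} Z_j for every i. -/
universe u

/-- A nontrivial connected loopless digraph is prime if in every representation as a
Cartesian product of two digraphs one factor has exactly one vertex. -/
def Digraph.IsPrimeLoopless {α : Type u} (G : Digraph α) : Prop :=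
  G.Connected ∧ Nontrivial α ∧ (∀ v, ¬ G.Adj v v) ∧
    ∀ {A B : Type u} (GA : Digraph A) (GB : Digraph B),
      Nonempty (G.Iso (GA.boxProd GB)) →
        (Nonempty A ∧ Subsingleton A) ∨ (Nonempty B ∧ Subsingleton B)

/-- Box product of a family of simple graphs: two vertices are adjacent iff they differ
in exactly one coordinate and are adjacent there. -/
def SimpleGraph.boxProdFam {I : Type*} {V : I → Type*} (Z : ∀ i, SimpleGraph (V i)) :
    SimpleGraph (∀ i, V i) where
  Adj u v := ∃ κ, (Z κ).Adj (u κ) (v κ) ∧ ∀ i, i ≠ κ → u i = v i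
  symm := by
    constructor
    rintro u v ⟨κ, h, hh⟩
    exact ⟨κ, h.symm, fun i hi => (hh i hi).symm⟩
  loopless := by
    constructor
    rintro u ⟨κ, h, -⟩
    exact (Z κ).irrefl h

/-- A simple graph is prime w.r.t. the box product if it is connected, nontrivial and in
every representation as a box product of two simple graphs one factor has exactly one
vertex. -/
def SimpleGraph.IsPrimeGraph {α : Type u} (Z : SimpleGraph α) : Prop :=
  Z.Connected ∧ Nontrivial α ∧
    ∀ {A B : Type u} (ZA : SimpleGraph A) (ZB : SimpleGraph B),
      Nonempty (Z ≃g ZA.boxProd ZB) →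
        (Nonempty A ∧ Subsingleton A) ∨ (Nonempty B ∧ Subsingleton B)


/-!
Let `φ : ∏ⱼ Zⱼ ≃g A □ B` with every `Zⱼ` prime. An edge of the product changes a single
coordinate `j`, and `φ` sends it to an `A`-edge or a `B`-edge. Opposite edges of a square go to
the same side, so the side of a `j`-edge survives moving it across an edge in another coordinate.
Inside one `j`-layer (a copy of `Zⱼ`), `B`-edges can be slid along `A`-walks without leaving the
layer, so the image of the layer is a rectangle `S × T`; then `Zⱼ ≅ S □ T`, and primality puts all
edges of the layer on one side. Hence the side depends on `j` alone, which splits the index set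
into `J_A ⊔ J_B` with `A ≅ ∏_{J_A} Zⱼ` and `B ≅ ∏_{J_B} Zⱼ`. Splitting off one factor at a time
refines any factorization `∏ᵢ Hᵢ`; applied to `S(∏ᵢ Gᵢ) = ∏ᵢ S(Gᵢ)` this is the theorem.
-/

namespace SimpleGraph

theorem Reachable.induction {V : Type*} {G : SimpleGraph V} {u v : V} {Q : V → Prop}
    (h : G.Reachable u v) (hu : Q u) (step : ∀ a b, G.Adj a b → Q a → Q b) : Q v := by
  rw [reachable_iff_reflTransGen] at h
  induction h with
  | refl => exact hu
  | tail _ hab ih => exact step _ _ hab ih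

section BoxProd

variable {α β α' β' : Type*} {G : SimpleGraph α} {H : SimpleGraph β}
  {GA : SimpleGraph α'} {GB : SimpleGraph β'}

lemma boxProd_snd_eq_iff_of_square {p₁ p₂ p₃ p₄ : α × β} (h₁₂ : (G □ H).Adj p₁ p₂)
    (h₂₃ : (G □ H).Adj p₂ p₃) (h₃₄ : (G □ H).Adj p₃ p₄) (h₄₁ : (G □ H).Adj p₄ p₁)
    (h₁₃ : p₁ ≠ p₃) (h₂₄ : p₂ ≠ p₄) : p₁.2 = p₂.2 ↔ p₃.2 = p₄.2 := by
  rw [boxProd_adj] at h₁₂ h₂₃ h₃₄ h₄₁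
  rcases h₁₂ with ⟨a₁, e₁⟩ | ⟨b₁, e₁⟩ <;> rcases h₂₃ with ⟨a₂, e₂⟩ | ⟨b₂, e₂⟩ <;>
    rcases h₃₄ with ⟨a₃, e₃⟩ | ⟨b₃, e₃⟩ <;> rcases h₄₁ with ⟨a₄, e₄⟩ | ⟨b₄, e₄⟩ <;>
    grind [Prod.ext_iff, Adj.ne]

noncomputable def isoBoxProdInduceOfRectangle {Y : Type*} {K : SimpleGraph Y} (f : K ↪g G □ H)
    (hf : ∀ x y, ∃ z, f z = ((f x).1, (f y).2)) :
    K ≃g G.induce (Set.range fun x => (f x).1) □ H.induce (Set.range fun x => (f x).2) where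
  toEquiv := Equiv.ofBijective (fun x => (⟨(f x).1, x, rfl⟩, ⟨(f x).2, x, rfl⟩)) <| by
    refine ⟨fun x y hxy => f.injective ?_, ?_⟩
    · simp only [Prod.ext_iff, Subtype.ext_iff] at hxy
      exact Prod.ext hxy.1 hxy.2
    · rintro ⟨⟨_, x, rfl⟩, ⟨_, y, rfl⟩⟩
      obtain ⟨z, hz⟩ := hf x y
      exact ⟨z, by simp [hz]⟩
  map_rel_iff' {x y} := by
    rw [← f.map_rel_iff, boxProd_adj, boxProd_adj]
    simp only [Subtype.ext_iff]
    exact Iff.rfl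

noncomputable def isoOfBoxProdIsoEqProdMap (ψ : (G □ H) ≃g GA □ GB) {g : α → α'} {h : β → β'}
    (hψ : ∀ x, ψ x = Prod.map g h x) (q : β) : G ≃g GA where
  toEquiv := Equiv.ofBijective g <| by
    refine ⟨fun p p' hp => ?_, fun a => ?_⟩
    · have : ψ (p, q) = ψ (p', q) := by simp [hψ, hp]
      exact congrArg Prod.fst (ψ.injective this)
    · have := hψ (ψ.symm (a, h q))
      rw [ψ.apply_symm_apply] at this
      exact ⟨_, (congrArg Prod.fst this).symm⟩
  map_rel_iff' {p p'} := by
    change GA.Adj (g p) (g p') ↔ _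
    rw [← boxProd_adj_left (G := G) (H := H) (b := q), ← ψ.map_adj_iff, hψ, hψ]
    exact boxProd_adj_left.symm

lemma nonempty_iso_of_boxProd_iso (ψ : (G □ H) ≃g GA □ GB) (hG : G.Connected) (hH : H.Connected)
    (hGA : ∀ p p' q, G.Adj p p' → (ψ (p, q)).2 = (ψ (p', q)).2)
    (hHB : ∀ p q q', H.Adj q q' → (ψ (p, q)).1 = (ψ (p, q')).1) :
    Nonempty (G ≃g GA) ∧ Nonempty (H ≃g GB) := by
  obtain ⟨p₀⟩ := hG.nonempty
  obtain ⟨q₀⟩ := hH.nonempty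
  have hψ : ∀ x, ψ x = Prod.map (fun p => (ψ (p, q₀)).1) (fun q => (ψ (p₀, q)).2) x := by
    rintro ⟨p, q⟩
    refine Prod.ext ?_ ?_
    · exact (hH.preconnected q₀ q).induction (Q := fun q => (ψ (p, q₀)).1 = (ψ (p, q)).1) rfl
        (fun _ _ hab h => h.trans (hHB p _ _ hab)) |>.symm
    · exact (hG.preconnected p₀ p).induction (Q := fun p => (ψ (p₀, q)).2 = (ψ (p, q)).2) rfl
        (fun _ _ hab h => h.trans (hGA _ _ q hab)) |>.symm
  refine ⟨⟨isoOfBoxProdIsoEqProdMap ψ hψ q₀⟩, ⟨isoOfBoxProdIsoEqProdMap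
    ((boxProdComm H G).trans (ψ.trans (boxProdComm GA GB)))
    (g := fun q => (ψ (p₀, q)).2) (h := fun p => (ψ (p, q₀)).1) (fun ⟨q, p⟩ => ?_) p₀⟩⟩
  change (ψ (p, q)).swap = _
  rw [hψ (p, q)]
  rfl

end BoxProd

lemma IsPrimeGraph.fst_eq_or_snd_eq {Y α β : Type u} {K : SimpleGraph Y} {G : SimpleGraph α}
    {H : SimpleGraph β} (hK : K.IsPrimeGraph) (f : K ↪g G □ H)
    (hf : ∀ x y, ∃ z, f z = ((f x).1, (f y).2)) :
    (∀ x y, (f x).1 = (f y).1) ∨ (∀ x y, (f x).2 = (f y).2) := by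
  rcases hK.2.2 _ _ ⟨isoBoxProdInduceOfRectangle f hf⟩ with ⟨-, h⟩ | ⟨-, h⟩
  · exact .inl fun x y => congrArg Subtype.val (h.elim ⟨_, x, rfl⟩ ⟨_, y, rfl⟩)
  · exact .inr fun x y => congrArg Subtype.val (h.elim ⟨_, x, rfl⟩ ⟨_, y, rfl⟩)

section BoxProdFam

variable {J : Type*} {X : J → Type*} {Z : ∀ j, SimpleGraph (X j)}

lemma boxProdFam_adj_of_apply_ne {u v : ∀ j, X j} (h : (boxProdFam Z).Adj u v) {j : J}
    (hj : u j ≠ v j) : (Z j).Adj (u j) (v j) ∧ ∀ i, i ≠ j → u i = v i := by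
  obtain ⟨κ, hκ, he⟩ := h
  obtain rfl : j = κ := by_contra fun hne => hj (he j hne)
  exact ⟨hκ, he⟩

lemma boxProdFam_apply_eq_of_adj {u v : ∀ j, X j} (h : (boxProdFam Z).Adj u v) {i j : J}
    (hj : u j ≠ v j) (hij : i ≠ j) : u i = v i :=
  (boxProdFam_adj_of_apply_ne h hj).2 i hij

lemma boxProdFam_apply_ne_of_square_of_apply_ne {u₁ u₂ u₃ u₄ : ∀ j, X j}
    (h₁₂ : (boxProdFam Z).Adj u₁ u₂) (h₂₃ : (boxProdFam Z).Adj u₂ u₃)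
    (h₃₄ : (boxProdFam Z).Adj u₃ u₄) (h₄₁ : (boxProdFam Z).Adj u₄ u₁)
    (h₁₃ : u₁ ≠ u₃) {j : J} (hj₁₂ : u₁ j ≠ u₂ j) (hj₂₃ : u₂ j ≠ u₃ j) : u₃ j ≠ u₄ j := by
  intro hj₃₄
  obtain ⟨κ, hκ⟩ := Function.ne_iff.mp h₃₄.ne
  have hκj : κ ≠ j := by rintro rfl; exact hκ hj₃₄
  have h₁₃κ : u₁ κ = u₃ κ :=
    (boxProdFam_apply_eq_of_adj h₁₂ hj₁₂ hκj).trans (boxProdFam_apply_eq_of_adj h₂₃ hj₂₃ hκj)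
  have h₄₁j : u₄ j = u₁ j := by
    by_contra hne
    exact hκ ((boxProdFam_apply_eq_of_adj h₄₁ hne hκj).trans h₁₃κ).symm
  refine h₁₃ (funext fun i => ?_)
  by_cases hij : i = j
  · subst hij; exact h₄₁j.symm.trans hj₃₄.symm
  · exact (boxProdFam_apply_eq_of_adj h₁₂ hj₁₂ hij).trans (boxProdFam_apply_eq_of_adj h₂₃ hj₂₃ hij)

lemma boxProdFam_apply_ne_of_square {u₁ u₂ u₃ u₄ : ∀ j, X j}
    (h₁₂ : (boxProdFam Z).Adj u₁ u₂) (h₂₃ : (boxProdFam Z).Adj u₂ u₃)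
    (h₃₄ : (boxProdFam Z).Adj u₃ u₄) (h₄₁ : (boxProdFam Z).Adj u₄ u₁)
    (h₁₃ : u₁ ≠ u₃) (h₂₄ : u₂ ≠ u₄) {j : J} (hj : u₁ j ≠ u₂ j) : u₃ j ≠ u₄ j := by
  by_cases hj₂₃ : u₂ j = u₃ j
  · intro hj₃₄
    have hj₁₄ : u₁ j ≠ u₄ j := fun h => hj (h.trans (hj₃₄.symm.trans hj₂₃.symm))
    exact boxProdFam_apply_ne_of_square_of_apply_ne h₁₂.symm h₄₁.symm h₃₄.symm h₂₃.symm h₂₄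
      (Ne.symm hj) hj₁₄ hj₃₄.symm
  · exact boxProdFam_apply_ne_of_square_of_apply_ne h₁₂ h₂₃ h₃₄ h₄₁ h₁₃ hj hj₂₃

section Update

variable [DecidableEq J]

lemma boxProdFam_adj_update_iff {u : ∀ j, X j} {j : J} {x y : X j} :
    (boxProdFam Z).Adj (Function.update u j x) (Function.update u j y) ↔ (Z j).Adj x y := by
  refine ⟨fun ⟨κ, hκ, _⟩ => ?_, fun h => ⟨j, by simpa using h, fun i hi => by simp [hi]⟩⟩
  by_cases hκj : κ = j
  · subst hκj; simpa using hκ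
  · simp [hκj] at hκ

lemma boxProdFam_adj_update_self_iff {u : ∀ j, X j} {j : J} {y : X j} :
    (boxProdFam Z).Adj u (Function.update u j y) ↔ (Z j).Adj (u j) y := by
  simpa using boxProdFam_adj_update_iff (u := u) (x := u j) (y := y)

def boxProdFamLayer (u : ∀ j, X j) (j : J) : Z j ↪g boxProdFam Z where
  toFun x := Function.update u j x
  inj' := Function.update_injective u j
  map_rel_iff' := boxProdFam_adj_update_iff

lemma boxProdFam_eq_update_of_adj {u v : ∀ j, X j} (h : (boxProdFam Z).Adj u v) {j : J}
    (hj : u j ≠ v j) : v = Function.update u j (v j) := by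
  funext i
  by_cases hij : i = j
  · subst hij; simp
  · simp [hij, boxProdFam_apply_eq_of_adj h hj hij]

lemma boxProdFam_adj_update_of_adj {u w : ∀ j, X j} (h : (boxProdFam Z).Adj u w) {j : J}
    (hj : u j = w j) (c : X j) :
    (boxProdFam Z).Adj (Function.update u j c) (Function.update w j c) := by
  obtain ⟨κ, hκ, he⟩ := h
  have hκj : κ ≠ j := by rintro rfl; exact hκ.ne hj
  refine ⟨κ, by simpa [hκj] using hκ, fun i hi => ?_⟩
  by_cases hij : i = j
  · subst hij; simp
  · simp [hij, he i hi]

lemma boxProdFam_reachable_update (hZ : ∀ j, (Z j).Preconnected) (u : ∀ j, X j) (j : J)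
    (x : X j) : (boxProdFam Z).Reachable u (Function.update u j x) := by
  simpa [boxProdFamLayer] using ((hZ j) (u j) x).map (boxProdFamLayer u j).toHom

lemma boxProdFam_reachable_of_eqOn_compl (hZ : ∀ j, (Z j).Preconnected) (D : Finset J) :
    ∀ u v : ∀ j, X j, (∀ j ∉ D, u j = v j) → (boxProdFam Z).Reachable u v := by
  induction D using Finset.induction with
  | empty => exact fun u v h => (funext fun j => h j (Finset.notMem_empty j)) ▸ .rfl
  | @insert j D _ ih =>
    refine fun u v h => (boxProdFam_reachable_update hZ u j (v j)).trans (ih _ _ fun i hi => ?_)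
    by_cases hij : i = j
    · subst hij; simp
    · simpa [hij] using h i (by simp [hi, hij])

end Update

lemma boxProdFam_connected [Fintype J] (hZ : ∀ j, (Z j).Connected) :
    (boxProdFam Z).Connected := by
  classical
  have : Nonempty (∀ j, X j) := ⟨fun j => (hZ j).nonempty.some⟩
  exact (connected_iff _).mpr ⟨fun u v => boxProdFam_reachable_of_eqOn_compl
    (fun j => (hZ j).preconnected) Finset.univ u v (by simp), this⟩

def boxProdFamIsoBoxProdSubtype (P : J → Prop) [DecidablePred P] :
    boxProdFam Z ≃g
      (boxProdFam fun j : {j // P j} => Z j) □ (boxProdFam fun j : {j // ¬P j} => Z j) where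
  toEquiv := Equiv.piEquivPiSubtypeProd P X
  map_rel_iff' {u v} := by
    simp only [boxProd_adj, Equiv.piEquivPiSubtypeProd_apply]
    constructor
    · rintro (⟨⟨κ, hκ, he⟩, hr⟩ | ⟨⟨κ, hκ, he⟩, ht⟩)
      · refine ⟨κ, hκ, fun i hi => ?_⟩
        by_cases hPi : P i
        · exact he ⟨i, hPi⟩ fun h => hi (congrArg Subtype.val h)
        · exact congrFun hr ⟨i, hPi⟩
      · refine ⟨κ, hκ, fun i hi => ?_⟩
        by_cases hPi : P i
        · exact congrFun ht ⟨i, hPi⟩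
        · exact he ⟨i, hPi⟩ fun h => hi (congrArg Subtype.val h)
    · rintro ⟨κ, hκ, he⟩
      by_cases hPκ : P κ
      · exact .inl ⟨⟨⟨κ, hPκ⟩, hκ, fun i hi => he i fun h => hi (Subtype.ext h)⟩,
          funext fun i => he i fun h => i.2 (h ▸ hPκ)⟩
      · exact .inr ⟨⟨⟨κ, hPκ⟩, hκ, fun i hi => he i fun h => hi (Subtype.ext h)⟩,
          funext fun i => he i fun h => hPκ (h ▸ i.2)⟩

end BoxProdFam

def boxProdFamCongrLeft {J₁ J₂ : Type*} {X : J₂ → Type*} (e : J₁ ≃ J₂)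
    (Z : ∀ j, SimpleGraph (X j)) : boxProdFam (fun j => Z (e j)) ≃g boxProdFam Z where
  toEquiv := Equiv.piCongrLeft X e
  map_rel_iff' {u v} := by
    constructor
    · rintro ⟨κ, hκ, he⟩
      obtain ⟨κ, rfl⟩ := e.surjective κ
      refine ⟨κ, by simpa using hκ, fun i hi => ?_⟩
      simpa using he (e i) (e.injective.ne hi)
    · rintro ⟨κ, hκ, he⟩
      refine ⟨e κ, by simpa using hκ, fun i hi => ?_⟩
      obtain ⟨i, rfl⟩ := e.surjective i
      simpa using he i fun h => hi (congrArg e h)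

def boxProdFamFinSuccIso {k : ℕ} {W : Fin (k + 1) → Type*} (H : ∀ i, SimpleGraph (W i)) :
    boxProdFam H ≃g H 0 □ boxProdFam fun i : Fin k => H i.succ where
  toEquiv := (Fin.consEquiv W).symm
  map_rel_iff' {u v} := by
    simp only [Fin.consEquiv_symm_apply, boxProd_adj]
    constructor
    · rintro (⟨h₀, ht⟩ | ⟨⟨κ, hκ, he⟩, h₀⟩)
      · exact ⟨0, h₀, Fin.cases (absurd rfl) fun i _ => congrFun ht i⟩
      · exact ⟨κ.succ, hκ, Fin.cases (fun _ => h₀) fun i hi => he i (ne_of_apply_ne _ hi)⟩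
    · rintro ⟨κ, hκ, he⟩
      induction κ using Fin.cases with
      | zero => exact .inl ⟨hκ, funext fun i => he i.succ (Fin.succ_ne_zero i)⟩
      | succ κ => exact .inr ⟨⟨κ, hκ, fun i hi => he i.succ (Fin.succ_injective _ |>.ne hi)⟩,
          he 0 (Fin.succ_ne_zero κ).symm⟩

/-! For `φ : boxProdFam Z ≃g GA □ GB`, an edge `u v` is sent to a `GA`-edge iff
`(φ u).2 = (φ v).2`, and to a `GB`-edge iff `(φ u).1 = (φ v).1`. -/

namespace Iso

section Sides

variable {J : Type*} {X : J → Type*} {Z : ∀ j, SimpleGraph (X j)}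
  {A B : Type*} {GA : SimpleGraph A} {GB : SimpleGraph B} (φ : boxProdFam Z ≃g GA □ GB)

lemma symm_apply_ne_of_reachable {a a' : A} (ha : GA.Reachable a a') {b b' : B} {j : J}
    (hbb' : GB.Adj b b') (hj : φ.symm (a, b) j ≠ φ.symm (a, b') j) :
    φ.symm (a', b) j ≠ φ.symm (a', b') j := by
  refine ha.induction (Q := fun c => φ.symm (c, b) j ≠ φ.symm (c, b') j) hj
    fun c d hcd hc => ?_
  have adj {p q : A × B} (h : (GA □ GB).Adj p q) : (boxProdFam Z).Adj (φ.symm p) (φ.symm q) :=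
    φ.symm.map_adj_iff.mpr h
  exact (boxProdFam_apply_ne_of_square (adj (boxProd_adj_right.mpr hbb'))
    (adj (boxProd_adj_left.mpr hcd)) (adj (boxProd_adj_right.mpr hbb'.symm))
    (adj (boxProd_adj_left.mpr hcd.symm)) (φ.symm.injective.ne (by simp [hcd.ne]))
    (φ.symm.injective.ne (by simp [hcd.ne])) hc).symm

variable [DecidableEq J]

lemma exists_adj_snd_eq_iff_of_apply_eq {u v w : ∀ j, X j} {j : J}
    (huv : (boxProdFam Z).Adj u v) (hj : u j ≠ v j) (huw : (boxProdFam Z).Adj u w)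
    (hwj : u j = w j) :
    ∃ x, (boxProdFam Z).Adj w x ∧ w j ≠ x j ∧ ((φ u).2 = (φ v).2 ↔ (φ w).2 = (φ x).2) := by
  have hv : v = Function.update u j (v j) := boxProdFam_eq_update_of_adj huv hj
  have hwx : (boxProdFam Z).Adj w (Function.update w j (v j)) :=
    boxProdFam_adj_update_self_iff.mpr (hwj ▸ (boxProdFam_adj_of_apply_ne huv hj).1)
  have hvx : (boxProdFam Z).Adj v (Function.update w j (v j)) := by
    have := boxProdFam_adj_update_of_adj huw hwj (v j)
    rwa [← hv] at this
  refine ⟨_, hwx, by simpa [← hwj] using hj, ?_⟩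
  rw [boxProd_snd_eq_iff_of_square (φ.map_adj_iff.mpr huv) (φ.map_adj_iff.mpr hvx)
    (φ.map_adj_iff.mpr hwx.symm) (φ.map_adj_iff.mpr huw.symm)
    (φ.injective.ne fun h => hj (by simpa using congrFun h j))
    (φ.injective.ne fun h => hj (hwj.trans (congrFun h j).symm)), eq_comm]

lemma exists_apply_update_eq (hA : GA.Preconnected) {j : J} (hZ : (Z j).Preconnected)
    (u : ∀ j, X j) (x y : X j) :
    ∃ z, φ (Function.update u j z) =
      ((φ (Function.update u j x)).1, (φ (Function.update u j y)).2) := by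
  set a := (φ (Function.update u j x)).1
  refine (hZ x y).induction (Q := fun y => ∃ z, φ (Function.update u j z) =
    (a, (φ (Function.update u j y)).2)) ⟨x, rfl⟩ fun y c hyc ⟨z, hz⟩ => ?_
  rcases boxProd_adj.mp (φ.map_adj_iff.mpr (boxProdFam_adj_update_iff.mpr hyc)) with
    ⟨-, hsnd⟩ | ⟨hbb', hfst⟩
  · exact ⟨z, hz.trans (by rw [hsnd])⟩
  set b := (φ (Function.update u j y)).2
  set b' := (φ (Function.update u j c)).2
  have hy : φ.symm ((φ (Function.update u j y)).1, b) = Function.update u j y := by simp [b]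
  have hc : φ.symm ((φ (Function.update u j y)).1, b') = Function.update u j c := by
    simp [b', hfst]
  have hz' : φ.symm (a, b) = Function.update u j z := by simp [← hz]
  -- slide the `GB`-edge `y c` of the layer to first coordinate `a`, where it starts at `z`
  have hj := φ.symm_apply_ne_of_reachable (j := j) (hA _ a) hbb'
    (by rw [hy, hc]; simpa using hyc.ne)
  rw [hz'] at hj
  set w := φ.symm (a, b')
  have hzw : (boxProdFam Z).Adj (Function.update u j z) w := by
    rw [← hz']; exact φ.symm.map_adj_iff.mpr (boxProd_adj_right.mpr hbb')
  have hw : w = Function.update u j (w j) := by simpa using boxProdFam_eq_update_of_adj hzw hj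
  exact ⟨w j, by rw [← hw]; simp [w]⟩

end Sides

section PrimeSides

variable {J : Type u} {X : J → Type u} {Z : ∀ j, SimpleGraph (X j)} [DecidableEq J]
  {A B : Type u} {GA : SimpleGraph A} {GB : SimpleGraph B} (φ : boxProdFam Z ≃g GA □ GB)

lemma layer_fst_eq_or_snd_eq (hA : GA.Preconnected) {j : J} (hZ : (Z j).IsPrimeGraph)
    (u : ∀ j, X j) :
    (∀ x y, (φ (Function.update u j x)).1 = (φ (Function.update u j y)).1) ∨
      (∀ x y, (φ (Function.update u j x)).2 = (φ (Function.update u j y)).2) :=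
  hZ.fst_eq_or_snd_eq ((boxProdFamLayer u j).trans φ.toEmbedding)
    (φ.exists_apply_update_eq hA hZ.1.preconnected u)

lemma snd_eq_iff_of_adj (hA : GA.Preconnected) {j : J} (hZ : (Z j).IsPrimeGraph)
    {u v : ∀ j, X j} (huv : (boxProdFam Z).Adj u v) (hj : u j ≠ v j) :
    (φ u).2 = (φ v).2 ↔
      ∀ x y, (φ (Function.update u j x)).2 = (φ (Function.update u j y)).2 := by
  have hv : Function.update u j (v j) = v := (boxProdFam_eq_update_of_adj huv hj).symm
  refine ⟨fun hsnd => ?_, fun h => by simpa [hv] using h (u j) (v j)⟩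
  refine (φ.layer_fst_eq_or_snd_eq hA hZ u).resolve_left fun h => huv.ne (φ.injective ?_)
  exact Prod.ext (by simpa [hv] using h (u j) (v j)) hsnd

lemma exists_adj_snd_eq_iff_of_reachable (hA : GA.Preconnected) {j : J}
    (hZ : (Z j).IsPrimeGraph) {u v w : ∀ j, X j} (huv : (boxProdFam Z).Adj u v)
    (hj : u j ≠ v j) (huw : (boxProdFam Z).Reachable u w) :
    ∃ x, (boxProdFam Z).Adj w x ∧ w j ≠ x j ∧ ((φ u).2 = (φ v).2 ↔ (φ w).2 = (φ x).2) := by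
  refine huw.induction (Q := fun w => ∃ x, (boxProdFam Z).Adj w x ∧ w j ≠ x j ∧
    ((φ u).2 = (φ v).2 ↔ (φ w).2 = (φ x).2)) ⟨v, huv, hj, .rfl⟩
    fun a b hab ⟨a', haa', hj', hiff⟩ => ?_
  by_cases hjab : a j = b j
  · obtain ⟨x, hbx, hjx, hiff'⟩ := φ.exists_adj_snd_eq_iff_of_apply_eq haa' hj' hab hjab
    exact ⟨x, hbx, hjx, hiff.trans hiff'⟩
  · refine ⟨a, hab.symm, Ne.symm hjab, hiff.trans ?_⟩
    rw [φ.snd_eq_iff_of_adj hA hZ haa' hj', ← φ.snd_eq_iff_of_adj hA hZ hab hjab, eq_comm]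

lemma snd_eq_of_adj_or_fst_eq_of_adj (hZ : ∀ j, (Z j).IsPrimeGraph)
    (hconn : (boxProdFam Z).Preconnected) (hA : GA.Preconnected) (j : J) :
    (∀ u v, (boxProdFam Z).Adj u v → u j ≠ v j → (φ u).2 = (φ v).2) ∨
      (∀ u v, (boxProdFam Z).Adj u v → u j ≠ v j → (φ u).1 = (φ v).1) := by
  refine or_iff_not_imp_left.mpr fun h u' v' huv' hj' => ?_
  push Not at h
  obtain ⟨u, v, huv, hj, hsnd⟩ := h
  obtain ⟨w, huw, hjw, hiff⟩ :=
    φ.exists_adj_snd_eq_iff_of_reachable hA (hZ j) huv hj (hconn u u')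
  have hsnd' : (φ u').2 ≠ (φ v').2 := by
    rwa [Ne, φ.snd_eq_iff_of_adj hA (hZ j) huv' hj', ← φ.snd_eq_iff_of_adj hA (hZ j) huw hjw,
      ← hiff]
  rcases boxProd_adj.mp (φ.map_adj_iff.mpr huv') with ⟨-, h⟩ | ⟨-, h⟩
  exacts [absurd h hsnd', h]

end PrimeSides

end Iso

theorem exists_nonempty_iso_boxProdFam_subtype {J : Type u} [Fintype J] {X : J → Type u}
    {Z : ∀ j, SimpleGraph (X j)} {A B : Type u} {GA : SimpleGraph A} {GB : SimpleGraph B}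
    (hZ : ∀ j, (Z j).IsPrimeGraph) (φ : boxProdFam Z ≃g GA □ GB) :
    ∃ P : J → Prop, Nonempty (GA ≃g boxProdFam fun j : {j // P j} => Z j) ∧
      Nonempty (GB ≃g boxProdFam fun j : {j // ¬P j} => Z j) := by
  classical
  have hconn : (boxProdFam Z).Connected := boxProdFam_connected fun j => (hZ j).1
  have hA : GA.Preconnected := (connected_boxProd.mp (φ.connected_iff.mp hconn)).1.preconnected
  let P j := ∀ u v, (boxProdFam Z).Adj u v → u j ≠ v j → (φ u).2 = (φ v).2
  let e := boxProdFamIsoBoxProdSubtype (Z := Z) P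
  have hPQ := connected_boxProd.mp (e.connected_iff.mp hconn)
  have he {x y} (h : (boxProdFam _ □ boxProdFam _).Adj x y) :
      (boxProdFam Z).Adj (e.symm x) (e.symm y) := e.symm.map_adj_iff.mpr h
  have hcoord (x : _ × _) (j : {j // P j}) : e.symm x j = x.1 j := by
    change (Equiv.piEquivPiSubtypeProd P X).symm x j = _
    simp [j.2]
  have hcoord' (x : _ × _) (j : {j // ¬P j}) : e.symm x j = x.2 j := by
    change (Equiv.piEquivPiSubtypeProd P X).symm x j = _
    simp [j.2]
  obtain ⟨⟨ψA⟩, ⟨ψB⟩⟩ := nonempty_iso_of_boxProd_iso (e.symm.trans φ) hPQ.1 hPQ.2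
    (fun t t' r htt' => by
      have ⟨κ, hκ, _⟩ := htt'
      exact κ.2 _ _ (he (boxProd_adj_left.mpr htt')) (by simpa [hcoord] using hκ.ne))
    (fun t r r' hrr' => by
      have ⟨κ, hκ, _⟩ := hrr'
      exact ((φ.snd_eq_of_adj_or_fst_eq_of_adj hZ hconn.preconnected hA κ).resolve_left κ.2)
        _ _ (he (boxProd_adj_right.mpr hrr')) (by simpa [hcoord'] using hκ.ne))
  exact ⟨P, ⟨ψA.symm⟩, ⟨ψB.symm⟩⟩

theorem exists_nonempty_iso_boxProdFam_fiber (k : ℕ) {W : Fin k → Type u}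
    (H : ∀ i, SimpleGraph (W i)) {J : Type u} [Fintype J] {X : J → Type u}
    {Z : ∀ j, SimpleGraph (X j)} (hZ : ∀ j, (Z j).IsPrimeGraph)
    (φ : boxProdFam H ≃g boxProdFam Z) :
    ∃ p : J → Fin k, ∀ i, Nonempty (H i ≃g boxProdFam fun j : {j // p j = i} => Z j) := by
  induction k generalizing J X Z with
  | zero =>
    have : IsEmpty J := ⟨fun j => by
      have := fun j => (hZ j).1.nonempty
      have := (hZ j).2.1
      have := Pi.nontrivial_at (f := X) j
      exact not_subsingleton _ φ.symm.toEquiv.subsingleton⟩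
    exact ⟨isEmptyElim, fun i => i.elim0⟩
  | succ k ih =>
    classical
    obtain ⟨P, ⟨ψ₀⟩, ⟨ψ⟩⟩ :=
      exists_nonempty_iso_boxProdFam_subtype hZ (φ.symm.trans (boxProdFamFinSuccIso H))
    obtain ⟨p, hp⟩ := ih (fun i => H i.succ) (fun j : {j // ¬P j} => hZ j) ψ
    let q j : Fin (k + 1) := if h : P j then 0 else (p ⟨j, h⟩).succ
    refine ⟨q, Fin.cases ?_ fun i => ?_⟩
    · let e : {j // q j = 0} ≃ {j // P j} :=
        Equiv.subtypeEquivRight fun j => by by_cases h : P j <;> simp [q, h]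
      exact ⟨ψ₀.trans (boxProdFamCongrLeft e fun j => Z j).symm⟩
    · obtain ⟨ψᵢ⟩ := hp i
      let e : {j : {j // ¬P j} // p j = i} ≃ {j // q j = i.succ} :=
        (Equiv.subtypeSubtypeEquivSubtypeExists _ _).trans
          (Equiv.subtypeEquivRight fun j => by by_cases h : P j <;> simp [q, h, eq_comm])
      exact ⟨ψᵢ.trans (boxProdFamCongrLeft e fun j => Z j)⟩

end SimpleGraph

namespace Digraph

def shadowCongr {α β : Type*} {G : Digraph α} {H : Digraph β} (f : G.Iso H) :
    G.shadow ≃g H.shadow where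
  toEquiv := f.toEquiv
  map_rel_iff' {a b} := by
    change f a ≠ f b ∧ (H.Adj (f a) (f b) ∨ H.Adj (f b) (f a)) ↔ _
    simp only [ne_eq, EmbeddingLike.apply_eq_iff_eq, RelIso.map_rel_iff]
    rfl

theorem shadow_prodFam {I : Type*} {V : I → Type*} (G : ∀ i, Digraph (V i)) :
    (prodFam G).shadow = SimpleGraph.boxProdFam fun i => (G i).shadow := by
  have apply_ne {u v : ∀ i, V i} {κ : I} (huv : u ≠ v) (he : ∀ i, i ≠ κ → u i = v i) :
      u κ ≠ v κ := fun h => huv (funext fun i => by by_cases hi : i = κ; exacts [hi ▸ h, he i hi])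
  ext u v
  constructor
  · rintro ⟨huv, ⟨κ, hκ, he⟩ | ⟨κ, hκ, he⟩⟩
    · exact ⟨κ, ⟨apply_ne huv he, .inl hκ⟩, he⟩
    · exact ⟨κ, ⟨apply_ne huv fun i hi => (he i hi).symm, .inr hκ⟩, fun i hi => (he i hi).symm⟩
  · rintro ⟨κ, ⟨hne, hκ | hκ⟩, he⟩
    · exact ⟨fun h => hne (congrFun h κ), .inl ⟨κ, hκ, he⟩⟩
    · exact ⟨fun h => hne (congrFun h κ), .inr ⟨κ, hκ, fun i hi => (he i hi).symm⟩⟩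

end Digraph

theorem shadow_factorization_refines_general {V : Type u} (G : Digraph V)
    {k : ℕ} {W : Fin k → Type u} (Gs : ∀ i, Digraph (W i))
    (hG : Nonempty (G.Iso (Digraph.prodFam Gs)))
    {J : Type u} [Fintype J] {X : J → Type u} (Z : ∀ j, SimpleGraph (X j))
    (hZ : ∀ j, (Z j).IsPrimeGraph)
    (hS : Nonempty (G.shadow ≃g SimpleGraph.boxProdFam Z)) :
    ∃ p : J → Fin k, ∀ i,
      Nonempty ((Gs i).shadow ≃g
        SimpleGraph.boxProdFam (fun j : {j // p j = i} => Z j.1)) := by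
  obtain ⟨φ⟩ := hG
  obtain ⟨ψ⟩ := hS
  have φ' := Digraph.shadowCongr φ
  rw [Digraph.shadow_prodFam] at φ'
  exact SimpleGraph.exists_nonempty_iso_boxProdFam_fiber k _ hZ (φ'.symm.trans ψ)

/-- The prime factorization of the shadow of a finite connected loopless digraph refines
the prime factorization of the digraph: the prime factors of the shadow can be
partitioned (as fibers of a map `p : J → Fin k`) so that the shadow of each prime digraph
factor is the box product of the simple prime factors in the corresponding class. -/
theorem shadow_factorization_refines {V : Type u} [Fintype V] (G : Digraph V)
    (hconn : G.Connected) (hloopless : ∀ v, ¬ G.Adj v v) (hnt : Nontrivial V)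
    {k : ℕ} {W : Fin k → Type u} (Gs : ∀ i, Digraph (W i))
    (hGs : ∀ i, (Gs i).IsPrimeLoopless)
    (hG : Nonempty (G.Iso (Digraph.prodFam Gs)))
    {J : Type u} [Fintype J] {X : J → Type u} (Z : ∀ j, SimpleGraph (X j))
    (hZ : ∀ j, (Z j).IsPrimeGraph)
    (hS : Nonempty (G.shadow ≃g SimpleGraph.boxProdFam Z)) :
    ∃ p : J → Fin k, ∀ i,
      Nonempty ((Gs i).shadow ≃g
        SimpleGraph.boxProdFam (fun j : {j // p j = i} => Z j.1)) :=
  shadow_factorization_refines_general G Gs hG Z hZ hS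
end
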